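/- arXiv:math/0609068 — 5 statements merged into one kernel-verified Lean document; each statement's English description precedes it below -/
import Mathlib

section
/- Define for ε > 0 the functions G_ε(x) = ∫₀^ε (2πr)^{−1/2} exp(−x²/(2r)) dr and H_ε(x) = ∫₀^ε |x| · (2πr³)^{−1/2} exp(−x²/(2r)) dr on ℝ. Then both ∫_ℝ G_ε(x)² dx and ∫_ℝ H_ε(x)² dx tend to 0 as ε → 0⁺. -/
open MeasureTheory Real Filter

private lemma exp_neg_le_inv' {u : ℝ} (hu : 0 < u) : Real.exp (-u) ≤ u⁻¹ := by
  rw [Real.exp_neg]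
  have h : u ≤ Real.exp u := by linarith [Real.add_one_le_exp u]
  exact inv_anti₀ hu h

private lemma exp_neg_le_sq' {u : ℝ} (hu : 0 < u) : Real.exp (-u) ≤ 4 / u ^ 2 := by
  have h1 : u / 2 ≤ Real.exp (u / 2) := by linarith [Real.add_one_le_exp (u / 2)]
  have h2 : u ^ 2 / 4 ≤ Real.exp u := by
    have h := mul_le_mul h1 h1 (by positivity) (Real.exp_nonneg _)
    rw [← Real.exp_add] at h
    calc u ^ 2 / 4 = (u / 2) * (u / 2) := by ring
    _ ≤ Real.exp (u / 2 + u / 2) := h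
    _ = Real.exp u := by norm_num
  rw [Real.exp_neg, show (4 : ℝ) / u ^ 2 = (u ^ 2 / 4)⁻¹ from (inv_div _ _).symm]
  exact inv_anti₀ (by positivity) h2

/-! ### The `G` part -/

private lemma innerG_nonneg (ε x : ℝ) :
    0 ≤ ∫ r in Set.Ioc (0:ℝ) ε, (Real.sqrt (2 * π * r))⁻¹ * Real.exp (-x ^ 2 / (2 * r)) :=
  setIntegral_nonneg measurableSet_Ioc fun r _ => by positivity

private lemma innerG_le {ε : ℝ} (hε : 0 < ε) (x : ℝ) :
    (∫ r in Set.Ioc (0:ℝ) ε, (Real.sqrt (2 * π * r))⁻¹ * Real.exp (-x ^ 2 / (2 * r)))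
      ≤ 2 * Real.sqrt ε := by
  have hint : IntegrableOn (fun r : ℝ => r ^ (-(1/2) : ℝ)) (Set.Ioc 0 ε) := by
    rw [← intervalIntegrable_iff_integrableOn_Ioc_of_le hε.le]
    exact intervalIntegral.intervalIntegrable_rpow' (by norm_num)
  have hb : ∀ r ∈ Set.Ioc (0:ℝ) ε,
      (Real.sqrt (2 * π * r))⁻¹ * Real.exp (-x ^ 2 / (2 * r)) ≤ r ^ (-(1/2) : ℝ) := by
    intro r hr
    have hr0 : 0 < r := hr.1
    have h1 : (Real.sqrt (2 * π * r))⁻¹ ≤ (Real.sqrt r)⁻¹ := by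
      apply inv_anti₀ (Real.sqrt_pos.2 hr0)
      apply Real.sqrt_le_sqrt
      nlinarith [Real.pi_gt_three]
    have h2 : Real.exp (-x ^ 2 / (2 * r)) ≤ 1 := by
      rw [Real.exp_le_one_iff]
      apply div_nonpos_of_nonpos_of_nonneg <;> nlinarith
    calc (Real.sqrt (2 * π * r))⁻¹ * Real.exp (-x ^ 2 / (2 * r))
        ≤ (Real.sqrt r)⁻¹ * 1 := by
          apply mul_le_mul h1 h2 (Real.exp_nonneg _) (by positivity)
      _ = r ^ (-(1/2) : ℝ) := by
          rw [mul_one, Real.rpow_neg hr0.le, Real.sqrt_eq_rpow]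
  calc (∫ r in Set.Ioc (0:ℝ) ε, (Real.sqrt (2 * π * r))⁻¹ * Real.exp (-x ^ 2 / (2 * r)))
      ≤ ∫ r in Set.Ioc (0:ℝ) ε, r ^ (-(1/2) : ℝ) := by
        apply integral_mono_of_nonneg
        · exact ae_restrict_of_forall_mem measurableSet_Ioc fun r _ => by positivity
        · exact hint
        · exact ae_restrict_of_forall_mem measurableSet_Ioc hb
    _ = 2 * Real.sqrt ε := by
        rw [← intervalIntegral.integral_of_le hε.le, integral_rpow (Or.inl (by norm_num)),
          Real.sqrt_eq_rpow]
        norm_num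
        ring

private lemma innerG_tail {ε x : ℝ} (hε : 0 < ε) (hx : ε ≤ x ^ 2) :
    (∫ r in Set.Ioc (0:ℝ) ε, (Real.sqrt (2 * π * r))⁻¹ * Real.exp (-x ^ 2 / (2 * r)))
      ≤ 2 * Real.sqrt ε * ε / x ^ 2 := by
  have hx0 : 0 < x ^ 2 := lt_of_lt_of_le hε hx
  have hb : ∀ r ∈ Set.Ioc (0:ℝ) ε,
      (Real.sqrt (2 * π * r))⁻¹ * Real.exp (-x ^ 2 / (2 * r)) ≤ 2 * Real.sqrt ε / x ^ 2 := by
    intro r hr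
    have hr0 : 0 < r := hr.1
    have h1 : (Real.sqrt (2 * π * r))⁻¹ ≤ (Real.sqrt r)⁻¹ := by
      apply inv_anti₀ (Real.sqrt_pos.2 hr0)
      apply Real.sqrt_le_sqrt
      nlinarith [Real.pi_gt_three]
    have h2 : Real.exp (-x ^ 2 / (2 * r)) ≤ 2 * r / x ^ 2 := by
      have h := exp_neg_le_inv' (show 0 < x ^ 2 / (2 * r) by positivity)
      rw [show -x ^ 2 / (2 * r) = -(x ^ 2 / (2 * r)) by ring]
      calc Real.exp (-(x ^ 2 / (2 * r))) ≤ (x ^ 2 / (2 * r))⁻¹ := h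
        _ = 2 * r / x ^ 2 := by rw [inv_div]
    have hsr : (0:ℝ) < Real.sqrt r := Real.sqrt_pos.2 hr0
    calc (Real.sqrt (2 * π * r))⁻¹ * Real.exp (-x ^ 2 / (2 * r))
        ≤ (Real.sqrt r)⁻¹ * (2 * r / x ^ 2) := by
          apply mul_le_mul h1 h2 (Real.exp_nonneg _) (by positivity)
      _ = 2 * (r / Real.sqrt r) / x ^ 2 := by rw [div_eq_mul_inv r]; ring
      _ = 2 * Real.sqrt r / x ^ 2 := by rw [Real.div_sqrt]
      _ ≤ 2 * Real.sqrt ε / x ^ 2 := by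
          gcongr
          exact hr.2
  calc (∫ r in Set.Ioc (0:ℝ) ε, (Real.sqrt (2 * π * r))⁻¹ * Real.exp (-x ^ 2 / (2 * r)))
      ≤ ∫ _r in Set.Ioc (0:ℝ) ε, 2 * Real.sqrt ε / x ^ 2 := by
        apply integral_mono_of_nonneg
        · exact ae_restrict_of_forall_mem measurableSet_Ioc fun r _ => by positivity
        · exact integrableOn_const (by rw [Real.volume_Ioc]; exact ENNReal.ofReal_ne_top)
        · exact ae_restrict_of_forall_mem measurableSet_Ioc hb
    _ = 2 * Real.sqrt ε * ε / x ^ 2 := by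
        rw [setIntegral_const, Real.volume_real_Ioc_of_le (by linarith), smul_eq_mul]
        ring

/-! ### The `H` part -/

private lemma H_ptbound {x r : ℝ} (hx : x ≠ 0) (hr : 0 < r) :
    |x| * (Real.sqrt (2 * π * r ^ 3))⁻¹ * Real.exp (-x ^ 2 / (2 * r))
      ≤ 16 * Real.sqrt r / |x| ^ 3 := by
  have ha0 : 0 < |x| := abs_pos.2 hx
  have hs0 : 0 < Real.sqrt r := Real.sqrt_pos.2 hr
  have hrs : Real.sqrt r ^ 2 = r := Real.sq_sqrt hr.le
  have hxa : |x| ^ 2 = x ^ 2 := sq_abs x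
  have h1 : (Real.sqrt (2 * π * r ^ 3))⁻¹ ≤ (Real.sqrt r ^ 2 * Real.sqrt r)⁻¹ := by
    apply inv_anti₀ (by positivity)
    have hsq : Real.sqrt (r ^ 3) = Real.sqrt r ^ 2 * Real.sqrt r := by
      rw [show r ^ 3 = r ^ 2 * r by ring, Real.sqrt_mul (by positivity), Real.sqrt_sq hr.le, hrs]
    rw [← hsq]
    apply Real.sqrt_le_sqrt
    nlinarith [Real.pi_gt_three, pow_pos hr 3]
  have h2 : Real.exp (-x ^ 2 / (2 * r)) ≤ 16 * r ^ 2 / x ^ 4 := by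
    have hu : 0 < x ^ 2 / (2 * r) := by positivity
    have h := exp_neg_le_sq' hu
    rw [show -x ^ 2 / (2 * r) = -(x ^ 2 / (2 * r)) by ring]
    refine h.trans (le_of_eq ?_)
    have hx2 : x ^ 2 ≠ 0 := by positivity
    field_simp
    ring
  calc |x| * (Real.sqrt (2 * π * r ^ 3))⁻¹ * Real.exp (-x ^ 2 / (2 * r))
      ≤ |x| * (Real.sqrt r ^ 2 * Real.sqrt r)⁻¹ * (16 * r ^ 2 / x ^ 4) := by
        apply mul_le_mul (mul_le_mul_of_nonneg_left h1 ha0.le) h2 (Real.exp_nonneg _)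
          (by positivity)
    _ = 16 * Real.sqrt r / |x| ^ 3 := by
        have hx4 : x ^ 4 = |x| ^ 3 * |x| := by
          rw [show x ^ 4 = (x ^ 2) ^ 2 by ring, ← hxa]; ring
        rw [hx4]
        field_simp
        linear_combination (-(r + Real.sqrt r ^ 2)) * hrs

private lemma innerH_nonneg (ε x : ℝ) :
    0 ≤ ∫ r in Set.Ioc (0:ℝ) ε,
      |x| * (Real.sqrt (2 * π * r ^ 3))⁻¹ * Real.exp (-x ^ 2 / (2 * r)) :=
  setIntegral_nonneg measurableSet_Ioc fun r _ => by positivity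

private lemma H_contOn (x : ℝ) :
    ContinuousOn (fun r : ℝ => |x| * (Real.sqrt (2 * π * r ^ 3))⁻¹ * Real.exp (-x ^ 2 / (2 * r)))
      (Set.Ioi 0) := by
  apply ContinuousOn.mul
  · apply ContinuousOn.mul continuousOn_const
    apply ContinuousOn.inv₀
    · fun_prop
    · intro r hr
      have hr0 : (0:ℝ) < r := hr
      positivity
  · apply Real.continuous_exp.comp_continuousOn
    apply ContinuousOn.div continuousOn_const (by fun_prop)
    intro r hr
    have hr0 : (0:ℝ) < r := hr
    positivity

private lemma H_integrableOn {x b : ℝ} (hx : x ≠ 0) (hb : 0 < b) :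
    IntegrableOn
      (fun r : ℝ => |x| * (Real.sqrt (2 * π * r ^ 3))⁻¹ * Real.exp (-x ^ 2 / (2 * r)))
      (Set.Ioc 0 b) := by
  apply Integrable.mono' (integrable_const (16 * Real.sqrt b / |x| ^ 3))
  · exact ((H_contOn x).mono Set.Ioc_subset_Ioi_self).aestronglyMeasurable measurableSet_Ioc
  · refine ae_restrict_of_forall_mem measurableSet_Ioc fun r hr => ?_
    rw [Real.norm_eq_abs, abs_of_nonneg (by positivity)]
    refine (H_ptbound hx hr.1).trans ?_
    gcongr
    exact hr.2

private lemma H_piece1 {x : ℝ} (hx : x ≠ 0) :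
    (∫ r in Set.Ioc (0:ℝ) (x ^ 2),
      |x| * (Real.sqrt (2 * π * r ^ 3))⁻¹ * Real.exp (-x ^ 2 / (2 * r))) ≤ 16 := by
  have hx2 : (0:ℝ) < x ^ 2 := by positivity
  have ha0 : 0 < |x| := abs_pos.2 hx
  have hb : ∀ r ∈ Set.Ioc (0:ℝ) (x ^ 2),
      |x| * (Real.sqrt (2 * π * r ^ 3))⁻¹ * Real.exp (-x ^ 2 / (2 * r)) ≤ 16 / x ^ 2 := by
    intro r hr
    refine (H_ptbound hx hr.1).trans ?_
    have hsr : Real.sqrt r ≤ |x| := by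
      rw [← Real.sqrt_sq_eq_abs]
      exact Real.sqrt_le_sqrt hr.2
    have heq : 16 * |x| / |x| ^ 3 = 16 / x ^ 2 := by
      rw [show |x| ^ 3 = x ^ 2 * |x| by rw [← sq_abs]; ring]
      rw [div_eq_div_iff (by positivity) (by positivity)]
      ring
    rw [← heq]
    gcongr
  calc (∫ r in Set.Ioc (0:ℝ) (x ^ 2),
        |x| * (Real.sqrt (2 * π * r ^ 3))⁻¹ * Real.exp (-x ^ 2 / (2 * r)))
      ≤ ∫ _r in Set.Ioc (0:ℝ) (x ^ 2), 16 / x ^ 2 := by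
        apply integral_mono_of_nonneg
        · exact ae_restrict_of_forall_mem measurableSet_Ioc fun r _ => by positivity
        · exact integrableOn_const (by rw [Real.volume_Ioc]; exact ENNReal.ofReal_ne_top)
        · exact ae_restrict_of_forall_mem measurableSet_Ioc hb
    _ = 16 := by
        rw [setIntegral_const, Real.volume_real_Ioc_of_le (by linarith), smul_eq_mul, sub_zero]
        field_simp

private lemma H_piece2 {x ε : ℝ} (hx : x ≠ 0) (h : x ^ 2 ≤ ε) :
    (∫ r in Set.Ioc (x ^ 2) ε,
      |x| * (Real.sqrt (2 * π * r ^ 3))⁻¹ * Real.exp (-x ^ 2 / (2 * r))) ≤ 2 := by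
  have hx2 : (0:ℝ) < x ^ 2 := by positivity
  have hε : (0:ℝ) < ε := lt_of_lt_of_le hx2 h
  have ha0 : 0 < |x| := abs_pos.2 hx
  have hnot : (0:ℝ) ∉ Set.uIcc (x ^ 2) ε := Set.notMem_uIcc_of_lt hx2 hε
  have hint : IntegrableOn (fun r : ℝ => r ^ (-(3/2) : ℝ)) (Set.Ioc (x ^ 2) ε) := by
    rw [← intervalIntegrable_iff_integrableOn_Ioc_of_le h]
    exact intervalIntegral.intervalIntegrable_rpow (Or.inr hnot)
  have hb : ∀ r ∈ Set.Ioc (x ^ 2) ε,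
      |x| * (Real.sqrt (2 * π * r ^ 3))⁻¹ * Real.exp (-x ^ 2 / (2 * r))
        ≤ |x| * r ^ (-(3/2) : ℝ) := by
    intro r hr
    have hr0 : (0:ℝ) < r := lt_trans hx2 hr.1
    have h1 : (Real.sqrt (2 * π * r ^ 3))⁻¹ ≤ r ^ (-(3/2) : ℝ) := by
      have hsq : Real.sqrt (r ^ 3) = r ^ ((3:ℝ)/2) := by
        rw [Real.sqrt_eq_rpow, ← Real.rpow_natCast r 3, ← Real.rpow_mul hr0.le]
        norm_num
      rw [Real.rpow_neg hr0.le, ← hsq]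
      apply inv_anti₀ (Real.sqrt_pos.2 (by positivity))
      apply Real.sqrt_le_sqrt
      nlinarith [Real.pi_gt_three, pow_pos hr0 3]
    have h2 : Real.exp (-x ^ 2 / (2 * r)) ≤ 1 := by
      rw [Real.exp_le_one_iff]
      apply div_nonpos_of_nonpos_of_nonneg <;> nlinarith
    calc |x| * (Real.sqrt (2 * π * r ^ 3))⁻¹ * Real.exp (-x ^ 2 / (2 * r))
        ≤ |x| * r ^ (-(3/2) : ℝ) * 1 := by
          apply mul_le_mul (mul_le_mul_of_nonneg_left h1 ha0.le) h2 (Real.exp_nonneg _)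
            (by positivity)
      _ = |x| * r ^ (-(3/2) : ℝ) := mul_one _
  have hval : (∫ r in Set.Ioc (x ^ 2) ε, r ^ (-(3/2) : ℝ)) ≤ 2 / |x| := by
    rw [← intervalIntegral.integral_of_le h, integral_rpow (Or.inr ⟨by norm_num, hnot⟩)]
    have e1 : ((x ^ 2 : ℝ)) ^ (-(3/2) + 1 : ℝ) = |x|⁻¹ := by
      rw [show (-(3/2) + 1 : ℝ) = -(1/2) by norm_num, Real.rpow_neg (by positivity),
        ← Real.sqrt_eq_rpow, Real.sqrt_sq_eq_abs]
    have e2 : (0:ℝ) ≤ ε ^ (-(3/2) + 1 : ℝ) := Real.rpow_nonneg hε.le _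
    rw [e1]
    rw [show (ε ^ (-(3/2) + 1 : ℝ) - |x|⁻¹) / (-(3/2) + 1) =
      2 * (|x|⁻¹ - ε ^ (-(3/2) + 1 : ℝ)) by ring]
    rw [show (2:ℝ)/|x| = 2 * |x|⁻¹ from div_eq_mul_inv 2 _]
    linarith [e2]
  calc (∫ r in Set.Ioc (x ^ 2) ε,
        |x| * (Real.sqrt (2 * π * r ^ 3))⁻¹ * Real.exp (-x ^ 2 / (2 * r)))
      ≤ ∫ r in Set.Ioc (x ^ 2) ε, |x| * r ^ (-(3/2) : ℝ) := by
        apply integral_mono_of_nonneg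
        · exact ae_restrict_of_forall_mem measurableSet_Ioc fun r _ => by positivity
        · exact hint.const_mul _
        · exact ae_restrict_of_forall_mem measurableSet_Ioc hb
    _ = |x| * ∫ r in Set.Ioc (x ^ 2) ε, r ^ (-(3/2) : ℝ) := integral_const_mul _ _
    _ ≤ |x| * (2 / |x|) := by
        apply mul_le_mul_of_nonneg_left hval ha0.le
    _ = 2 := by field_simp

private lemma H_tail {ε x : ℝ} (hx : x ≠ 0) (hε : 0 < ε) (h : ε ≤ x ^ 2) :
    (∫ r in Set.Ioc (0:ℝ) ε,
      |x| * (Real.sqrt (2 * π * r ^ 3))⁻¹ * Real.exp (-x ^ 2 / (2 * r))) ≤ 16 * ε / x ^ 2 := by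
  have ha0 : 0 < |x| := abs_pos.2 hx
  have hb : ∀ r ∈ Set.Ioc (0:ℝ) ε,
      |x| * (Real.sqrt (2 * π * r ^ 3))⁻¹ * Real.exp (-x ^ 2 / (2 * r))
        ≤ 16 * Real.sqrt ε / |x| ^ 3 := by
    intro r hr
    refine (H_ptbound hx hr.1).trans ?_
    gcongr
    exact hr.2
  have hsx : Real.sqrt ε ≤ |x| := by
    rw [← Real.sqrt_sq_eq_abs]
    exact Real.sqrt_le_sqrt h
  calc (∫ r in Set.Ioc (0:ℝ) ε,
        |x| * (Real.sqrt (2 * π * r ^ 3))⁻¹ * Real.exp (-x ^ 2 / (2 * r)))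
      ≤ ∫ _r in Set.Ioc (0:ℝ) ε, 16 * Real.sqrt ε / |x| ^ 3 := by
        apply integral_mono_of_nonneg
        · exact ae_restrict_of_forall_mem measurableSet_Ioc fun r _ => by positivity
        · exact integrableOn_const (by rw [Real.volume_Ioc]; exact ENNReal.ofReal_ne_top)
        · exact ae_restrict_of_forall_mem measurableSet_Ioc hb
    _ = 16 * Real.sqrt ε * ε / |x| ^ 3 := by
        rw [setIntegral_const, Real.volume_real_Ioc_of_le (by linarith), smul_eq_mul]
        ring
    _ ≤ 16 * ε / x ^ 2 := by
        rw [div_le_div_iff₀ (by positivity) (by positivity)]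
        have hxa : |x| ^ 2 = x ^ 2 := sq_abs x
        have hcube : |x| ^ 3 = x ^ 2 * |x| := by rw [← hxa]; ring
        rw [hcube]
        nlinarith [mul_le_mul_of_nonneg_left hsx (show (0:ℝ) ≤ 16 * ε * x ^ 2 by positivity)]

private lemma H_uniform {ε : ℝ} (hε : 0 < ε) (x : ℝ) :
    (∫ r in Set.Ioc (0:ℝ) ε,
      |x| * (Real.sqrt (2 * π * r ^ 3))⁻¹ * Real.exp (-x ^ 2 / (2 * r))) ≤ 18 := by
  by_cases hx : x = 0
  · simp [hx]
  rcases le_or_gt ε (x ^ 2) with hc | hc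
  · have h1 := H_tail hx hε hc
    have hx2 : (0:ℝ) < x ^ 2 := by positivity
    have : 16 * ε / x ^ 2 ≤ 16 := by
      rw [div_le_iff₀ hx2]
      nlinarith
    linarith
  · have hx2 : (0:ℝ) < x ^ 2 := by positivity
    have hsplit : Set.Ioc (0:ℝ) ε = Set.Ioc (0:ℝ) (x ^ 2) ∪ Set.Ioc (x ^ 2) ε :=
      (Set.Ioc_union_Ioc_eq_Ioc hx2.le hc.le).symm
    rw [hsplit, setIntegral_union (Set.Ioc_disjoint_Ioc_of_le le_rfl) measurableSet_Ioc
      (H_integrableOn hx hx2) ((H_integrableOn hx hε).mono_set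
        (Set.Ioc_subset_Ioc_left hx2.le))]
    linarith [H_piece1 hx, H_piece2 hx hc.le]

/-! ### The integrable bound -/

private lemma bump_integrable {c : ℝ} (hc : c ≠ 0) :
    Integrable (fun x : ℝ => (1 + (x / c) ^ 2)⁻¹) :=
  integrable_inv_one_add_sq.comp_div hc

private lemma bump_integral {c : ℝ} (hc : 0 < c) :
    (∫ x : ℝ, (1 + (x / c) ^ 2)⁻¹) = c * π := by
  have h := MeasureTheory.Measure.integral_comp_div (fun y : ℝ => (1 + y ^ 2)⁻¹) c
  rw [h, integral_univ_inv_one_add_sq, smul_eq_mul, abs_of_pos hc]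

private lemma bump_eq {ε : ℝ} (hε : 0 < ε) (x : ℝ) :
    (1 + (x / Real.sqrt ε) ^ 2)⁻¹ = ε / (x ^ 2 + ε) := by
  rw [div_pow, Real.sq_sqrt hε.le]
  rw [show 1 + x ^ 2 / ε = (x ^ 2 + ε) / ε by field_simp; ring]
  rw [inv_div]

/-! ### Pointwise square bounds -/

private lemma Gsq_le {ε : ℝ} (hε : 0 < ε) (x : ℝ) :
    (∫ r in Set.Ioc (0:ℝ) ε, (Real.sqrt (2 * π * r))⁻¹ * Real.exp (-x ^ 2 / (2 * r))) ^ 2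
      ≤ 8 * ε * (1 + (x / Real.sqrt ε) ^ 2)⁻¹ := by
  rw [bump_eq hε]
  have h0 := innerG_nonneg ε x
  have hse : Real.sqrt ε ^ 2 = ε := Real.sq_sqrt hε.le
  rcases le_or_gt ε (x ^ 2) with hc | hc
  · have h1 := innerG_tail hε hc
    have hx2 : (0:ℝ) < x ^ 2 := lt_of_lt_of_le hε hc
    calc (∫ r in Set.Ioc (0:ℝ) ε, (Real.sqrt (2 * π * r))⁻¹ * Real.exp (-x ^ 2 / (2 * r))) ^ 2
        ≤ (2 * Real.sqrt ε * ε / x ^ 2) ^ 2 := by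
          apply pow_le_pow_left₀ h0 h1
      _ ≤ 8 * ε * (ε / (x ^ 2 + ε)) := by
          have k1 : ε * x ^ 2 ≤ x ^ 2 * x ^ 2 := mul_le_mul_of_nonneg_right hc (sq_nonneg x)
          have k2 : ε * ε ≤ x ^ 2 * x ^ 2 := mul_le_mul hc hc hε.le (sq_nonneg x)
          have k1' := mul_le_mul_of_nonneg_left k1 (mul_nonneg hε.le hε.le)
          have k2' := mul_le_mul_of_nonneg_left k2 (mul_nonneg hε.le hε.le)
          rw [div_pow, ← mul_div_assoc, div_le_div_iff₀ (by positivity) (by positivity)]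
          nlinarith [hse, hε.le, k1', k2']
  · have h1 := innerG_le hε x
    calc (∫ r in Set.Ioc (0:ℝ) ε, (Real.sqrt (2 * π * r))⁻¹ * Real.exp (-x ^ 2 / (2 * r))) ^ 2
        ≤ (2 * Real.sqrt ε) ^ 2 := by
          apply pow_le_pow_left₀ h0 h1
      _ = 4 * ε := by nlinarith [hse]
      _ ≤ 8 * ε * (ε / (x ^ 2 + ε)) := by
          rw [← mul_div_assoc, le_div_iff₀ (by positivity)]
          nlinarith [mul_le_mul_of_nonneg_left hc.le (show (0:ℝ) ≤ 4 * ε by positivity)]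

private lemma Hsq_le {ε : ℝ} (hε : 0 < ε) (x : ℝ) :
    (∫ r in Set.Ioc (0:ℝ) ε,
        |x| * (Real.sqrt (2 * π * r ^ 3))⁻¹ * Real.exp (-x ^ 2 / (2 * r))) ^ 2
      ≤ 1000 * (1 + (x / Real.sqrt ε) ^ 2)⁻¹ := by
  rw [bump_eq hε]
  have h0 := innerH_nonneg ε x
  by_cases hx : x = 0
  · simp [hx]
    positivity
  rcases le_or_gt ε (x ^ 2) with hc | hc
  · have h1 := H_tail hx hε hc
    have hx2 : (0:ℝ) < x ^ 2 := lt_of_lt_of_le hε hc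
    calc (∫ r in Set.Ioc (0:ℝ) ε,
          |x| * (Real.sqrt (2 * π * r ^ 3))⁻¹ * Real.exp (-x ^ 2 / (2 * r))) ^ 2
        ≤ (16 * ε / x ^ 2) ^ 2 := by
          apply pow_le_pow_left₀ h0 h1
      _ ≤ 1000 * (ε / (x ^ 2 + ε)) := by
          have k1 : ε * x ^ 2 ≤ x ^ 2 * x ^ 2 := mul_le_mul_of_nonneg_right hc (sq_nonneg x)
          have k2 : ε * ε ≤ x ^ 2 * x ^ 2 := mul_le_mul hc hc hε.le (sq_nonneg x)
          have k1' := mul_le_mul_of_nonneg_left k1 hε.le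
          have k2' := mul_le_mul_of_nonneg_left k2 hε.le
          rw [div_pow, ← mul_div_assoc, div_le_div_iff₀ (by positivity) (by positivity)]
          nlinarith [hε.le, k1', k2']
  · have h1 := H_uniform hε x
    calc (∫ r in Set.Ioc (0:ℝ) ε,
          |x| * (Real.sqrt (2 * π * r ^ 3))⁻¹ * Real.exp (-x ^ 2 / (2 * r))) ^ 2
        ≤ 18 ^ 2 := by
          apply pow_le_pow_left₀ h0 h1
      _ ≤ 1000 * (ε / (x ^ 2 + ε)) := by
          rw [← mul_div_assoc, le_div_iff₀ (by positivity)]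
          nlinarith [hc.le]

/-- L²-smallness of the short-time integrals of the heat kernel and of the
absolute value of its spatial derivative: with
`G_ε(x) = ∫₀^ε (2πr)^{-1/2} exp(-x²/(2r)) dr` and
`H_ε(x) = ∫₀^ε |x| (2πr³)^{-1/2} exp(-x²/(2r)) dr`,
both `∫_ℝ G_ε² ` and `∫_ℝ H_ε²` tend to `0` as `ε → 0⁺`. -/
theorem heat_kernel_short_time_L2_small :
    Tendsto (fun ε : ℝ => ∫ x : ℝ,
        (∫ r in Set.Ioc (0 : ℝ) ε,
          (Real.sqrt (2 * Real.pi * r))⁻¹ * Real.exp (-x ^ 2 / (2 * r))) ^ 2)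
      (nhdsWithin 0 (Set.Ioi 0)) (nhds 0) ∧
    Tendsto (fun ε : ℝ => ∫ x : ℝ,
        (∫ r in Set.Ioc (0 : ℝ) ε,
          |x| * (Real.sqrt (2 * Real.pi * r ^ 3))⁻¹ * Real.exp (-x ^ 2 / (2 * r))) ^ 2)
      (nhdsWithin 0 (Set.Ioi 0)) (nhds 0) := by
  constructor
  · apply squeeze_zero' (g := fun ε : ℝ => 8 * ε * (Real.sqrt ε * π))
    · exact Filter.eventually_of_mem self_mem_nhdsWithin fun ε _ =>
        integral_nonneg fun x => sq_nonneg _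
    · refine Filter.eventually_of_mem self_mem_nhdsWithin fun ε hε => ?_
      have hε0 : (0:ℝ) < ε := hε
      have hsε : Real.sqrt ε ≠ 0 := by positivity
      calc (∫ x : ℝ, (∫ r in Set.Ioc (0 : ℝ) ε,
            (Real.sqrt (2 * π * r))⁻¹ * Real.exp (-x ^ 2 / (2 * r))) ^ 2)
          ≤ ∫ x : ℝ, 8 * ε * (1 + (x / Real.sqrt ε) ^ 2)⁻¹ := by
            apply integral_mono_of_nonneg
            · exact Filter.Eventually.of_forall fun x => sq_nonneg _
            · exact (bump_integrable hsε).const_mul _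
            · exact Filter.Eventually.of_forall fun x => Gsq_le hε0 x
        _ = 8 * ε * (Real.sqrt ε * π) := by
            rw [integral_const_mul, bump_integral (Real.sqrt_pos.2 hε0)]
    · have hcont : Continuous fun ε : ℝ => 8 * ε * (Real.sqrt ε * π) := by fun_prop
      have := hcont.tendsto 0
      simp only [Real.sqrt_zero, mul_zero, zero_mul] at this
      exact this.mono_left nhdsWithin_le_nhds
  · apply squeeze_zero' (g := fun ε : ℝ => 1000 * (Real.sqrt ε * π))
    · exact Filter.eventually_of_mem self_mem_nhdsWithin fun ε _ =>
        integral_nonneg fun x => sq_nonneg _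
    · refine Filter.eventually_of_mem self_mem_nhdsWithin fun ε hε => ?_
      have hε0 : (0:ℝ) < ε := hε
      have hsε : Real.sqrt ε ≠ 0 := by positivity
      calc (∫ x : ℝ, (∫ r in Set.Ioc (0 : ℝ) ε,
            |x| * (Real.sqrt (2 * π * r ^ 3))⁻¹ * Real.exp (-x ^ 2 / (2 * r))) ^ 2)
          ≤ ∫ x : ℝ, 1000 * (1 + (x / Real.sqrt ε) ^ 2)⁻¹ := by
            apply integral_mono_of_nonneg
            · exact Filter.Eventually.of_forall fun x => sq_nonneg _
            · exact (bump_integrable hsε).const_mul _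
            · exact Filter.Eventually.of_forall fun x => Hsq_le hε0 x
        _ = 1000 * (Real.sqrt ε * π) := by
            rw [integral_const_mul, bump_integral (Real.sqrt_pos.2 hε0)]
    · have hcont : Continuous fun ε : ℝ => 1000 * (Real.sqrt ε * π) := by fun_prop
      have := hcont.tendsto 0
      simp only [Real.sqrt_zero, mul_zero, zero_mul] at this
      exact this.mono_left nhdsWithin_le_nhds
end

section
/- Fix ℓ > 0 and T > 0, and let I = [−ℓ, ℓ]. There is a constant C₁ > 0, depending only on ℓ and T, with the following property: for every t ∈ (0, T], every y ∈ (−ℓ, ℓ) and every continuous function f : [0, t] → ℝ, the function F(x) = ∫₀ᵗ f(s) · (2π(t−s))^{−1/2} · exp(−(x−y)²/(2(t−s))) ds is continuous on ℝ, is differentiable at every x ≠ y, and satisfies ∫_{−ℓ}^{ℓ} ( F(x)² + F′(x)² ) dx ≤ C₁² · (sup_{s∈[0,t]} |f(s)|)². -/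
open MeasureTheory Real

lemma aux_inv_sqrt_eq_rpow (u : ℝ) : (Real.sqrt u)⁻¹ = u ^ (-(1/2) : ℝ) := by
  rcases lt_or_ge u 0 with h | h
  · rw [Real.sqrt_eq_zero_of_nonpos h.le, inv_zero, Real.rpow_def_of_neg h]
    have : Real.cos (-(1/2) * π) = 0 := by
      rw [show (-(1/2) * π : ℝ) = -(π/2) by ring, Real.cos_neg, Real.cos_pi_div_two]
    rw [this, mul_zero]
  · rw [Real.rpow_neg h, ← Real.sqrt_eq_rpow]

lemma aux_exp_neg_le_sq (w : ℝ) (hw : 0 < w) : Real.exp (-w) ≤ 4 / w ^ 2 := by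
  have h1 : w / 2 + 1 ≤ Real.exp (w / 2) := Real.add_one_le_exp _
  have h3 : Real.exp (w / 2) * Real.exp (w / 2) = Real.exp w := by
    rw [← Real.exp_add]; ring_nf
  have h2 : w ^ 2 / 4 ≤ Real.exp w := by nlinarith [Real.exp_pos (w / 2)]
  rw [Real.exp_neg]
  have hpos : (0:ℝ) < w ^ 2 / 4 := by positivity
  calc (Real.exp w)⁻¹ ≤ (w ^ 2 / 4)⁻¹ := by
        apply inv_anti₀ hpos h2
    _ = 4 / w ^ 2 := by field_simp
lemma aux_exp_neg_le_cube (w : ℝ) (hw : 0 < w) : Real.exp (-w) ≤ 27 / w ^ 3 := by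
  have h1 : w / 3 + 1 ≤ Real.exp (w / 3) := Real.add_one_le_exp _
  have h3 : Real.exp (w / 3) * Real.exp (w / 3) * Real.exp (w / 3) = Real.exp w := by
    rw [← Real.exp_add, ← Real.exp_add]; ring_nf
  have h2 : w ^ 3 / 27 ≤ Real.exp w := by
    have hwe : w / 3 ≤ Real.exp (w / 3) := by linarith
    calc w ^ 3 / 27 = (w / 3) ^ 3 := by ring
      _ ≤ (Real.exp (w / 3)) ^ 3 := pow_le_pow_left₀ (by positivity) hwe 3
      _ = Real.exp w := by rw [← h3]; ring
  rw [Real.exp_neg]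
  have hpos : (0:ℝ) < w ^ 3 / 27 := by positivity
  calc (Real.exp w)⁻¹ ≤ (w ^ 3 / 27)⁻¹ := by
        apply inv_anti₀ hpos h2
    _ = 27 / w ^ 3 := by field_simp

lemma aux_ker_le (u : ℝ) (hu : 0 ≤ u) {e : ℝ} (he : e ≤ 0) :
    (Real.sqrt (2 * π * u))⁻¹ * Real.exp e ≤ (Real.sqrt u)⁻¹ := by
  have hE : Real.exp e ≤ 1 := Real.exp_le_one_iff.2 he
  have h1 : Real.sqrt u ≤ Real.sqrt (2 * π * u) :=
    Real.sqrt_le_sqrt (by nlinarith [Real.pi_gt_three])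
  rcases eq_or_lt_of_le hu with h0 | h0
  · rw [← h0]; simp
  · calc (Real.sqrt (2 * π * u))⁻¹ * Real.exp e ≤ (Real.sqrt (2 * π * u))⁻¹ * 1 :=
        mul_le_mul_of_nonneg_left hE (by positivity)
      _ = (Real.sqrt (2 * π * u))⁻¹ := mul_one _
      _ ≤ (Real.sqrt u)⁻¹ := inv_anti₀ (Real.sqrt_pos.2 h0) h1

lemma aux_P_far (u a Tv : ℝ) (hu : 0 < u) (ha : a ≠ 0) (huT : u ≤ Tv) :
    (Real.sqrt (2 * π * u))⁻¹ * Real.exp (-a ^ 2 / (2 * u)) * (|a| / u)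
      ≤ 216 * (Tv * Real.sqrt Tv) / |a| ^ 5 := by
  have hsu : 0 < Real.sqrt u := Real.sqrt_pos.2 hu
  have hsq : Real.sqrt u * Real.sqrt u = u := Real.mul_self_sqrt hu.le
  have hb : 0 < |a| := abs_pos.2 ha
  have ha2 : 0 < a ^ 2 := lt_of_le_of_ne (sq_nonneg a) (Ne.symm (pow_ne_zero 2 ha))
  have hw : 0 < a ^ 2 / (2 * u) := by positivity
  have hA : (Real.sqrt (2 * π * u))⁻¹ ≤ (Real.sqrt u)⁻¹ := by
    simpa using aux_ker_le u hu.le (le_refl (0:ℝ))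
  have hE : Real.exp (-a ^ 2 / (2 * u)) ≤ 27 / (a ^ 2 / (2 * u)) ^ 3 := by
    rw [neg_div]; exact aux_exp_neg_le_cube _ hw
  have step1 : (Real.sqrt (2 * π * u))⁻¹ * Real.exp (-a ^ 2 / (2 * u)) * (|a| / u)
      ≤ (Real.sqrt u)⁻¹ * (27 / (a ^ 2 / (2 * u)) ^ 3) * (|a| / u) :=
    mul_le_mul_of_nonneg_right
      (mul_le_mul hA hE (Real.exp_pos _).le (by positivity)) (by positivity)
  have step2 : (Real.sqrt u)⁻¹ * (27 / (a ^ 2 / (2 * u)) ^ 3) * (|a| / u)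
      = 216 * (u * Real.sqrt u) / |a| ^ 5 := by
    have h6 : a ^ 2 = |a| ^ 2 := (sq_abs a).symm
    rw [h6]
    have h66 : |a| ^ 6 = a ^ 6 := by rw [pow_abs, abs_of_nonneg (by positivity)]
    field_simp
    ring_nf
    linear_combination (-216 : ℝ) * hsq
  have step3 : 216 * (u * Real.sqrt u) / |a| ^ 5 ≤ 216 * (Tv * Real.sqrt Tv) / |a| ^ 5 := by
    gcongr <;> first
      | exact hu.le.trans huT
      | exact Real.sqrt_le_sqrt huT
      | positivity
  linarith [step1, step2.le, step2.ge, step3]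

lemma aux_P_near (u a : ℝ) (hu : 0 < u) (ha : a ≠ 0) (hua : u ≤ a ^ 2) :
    (Real.sqrt (2 * π * u))⁻¹ * Real.exp (-a ^ 2 / (2 * u)) * (|a| / u)
      ≤ 16 / a ^ 2 := by
  have hsu : 0 < Real.sqrt u := Real.sqrt_pos.2 hu
  have hsq : Real.sqrt u * Real.sqrt u = u := Real.mul_self_sqrt hu.le
  have hb : 0 < |a| := abs_pos.2 ha
  have ha2 : 0 < a ^ 2 := lt_of_le_of_ne (sq_nonneg a) (Ne.symm (pow_ne_zero 2 ha))
  have hw : 0 < a ^ 2 / (2 * u) := by positivity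
  have hA : (Real.sqrt (2 * π * u))⁻¹ ≤ (Real.sqrt u)⁻¹ := by
    simpa using aux_ker_le u hu.le (le_refl (0:ℝ))
  have hE : Real.exp (-a ^ 2 / (2 * u)) ≤ 4 / (a ^ 2 / (2 * u)) ^ 2 := by
    rw [neg_div]; exact aux_exp_neg_le_sq _ hw
  have step1 : (Real.sqrt (2 * π * u))⁻¹ * Real.exp (-a ^ 2 / (2 * u)) * (|a| / u)
      ≤ (Real.sqrt u)⁻¹ * (4 / (a ^ 2 / (2 * u)) ^ 2) * (|a| / u) :=
    mul_le_mul_of_nonneg_right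
      (mul_le_mul hA hE (Real.exp_pos _).le (by positivity)) (by positivity)
  have step2 : (Real.sqrt u)⁻¹ * (4 / (a ^ 2 / (2 * u)) ^ 2) * (|a| / u)
      = 16 * Real.sqrt u / |a| ^ 3 := by
    have h6 : a ^ 2 = |a| ^ 2 := (sq_abs a).symm
    rw [h6]
    have h44 : |a| ^ 4 = a ^ 4 := by rw [pow_abs, abs_of_nonneg (by positivity)]
    field_simp
    ring_nf
    linear_combination (-16 : ℝ) * hsq
  have hsa : Real.sqrt u ≤ |a| := by
    calc Real.sqrt u ≤ Real.sqrt (a ^ 2) := Real.sqrt_le_sqrt hua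
      _ = |a| := Real.sqrt_sq_eq_abs a
  have step3 : 16 * Real.sqrt u / |a| ^ 3 ≤ 16 / a ^ 2 := by
    rw [div_le_div_iff₀ (by positivity) ha2]
    have h6 : a ^ 2 = |a| ^ 2 := (sq_abs a).symm
    rw [h6]
    nlinarith [hsu.le, hb]
  linarith [step1, step2.le, step3]

lemma aux_P_mid (u a : ℝ) (hu : 0 < u) :
    (Real.sqrt (2 * π * u))⁻¹ * Real.exp (-a ^ 2 / (2 * u)) * (|a| / u)
      ≤ |a| * ((Real.sqrt u)⁻¹ * u⁻¹) := by
  have he : -a ^ 2 / (2 * u) ≤ 0 :=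
    div_nonpos_of_nonpos_of_nonneg (neg_nonpos.2 (sq_nonneg _)) (by linarith)
  have h1 : (Real.sqrt (2 * π * u))⁻¹ * Real.exp (-a ^ 2 / (2 * u)) ≤ (Real.sqrt u)⁻¹ :=
    aux_ker_le u hu.le he
  calc (Real.sqrt (2 * π * u))⁻¹ * Real.exp (-a ^ 2 / (2 * u)) * (|a| / u)
      ≤ (Real.sqrt u)⁻¹ * (|a| / u) := mul_le_mul_of_nonneg_right h1 (by positivity)
    _ = |a| * ((Real.sqrt u)⁻¹ * u⁻¹) := by rw [div_eq_mul_inv]; ring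

set_option maxHeartbeats 1000000 in
/-- Free-kernel form of estimate (1) of Lemma 3.1: there is `C₁ > 0`, depending
only on `ℓ` and `T`, such that for `t ∈ (0,T]`, `y ∈ (-ℓ,ℓ)` and `f` continuous
on `[0,t]`, the function `F(x) = ∫₀ᵗ f(s) (2π(t-s))^{-1/2} exp(-(x-y)²/(2(t-s))) ds`
is continuous, differentiable off `y`, and lies in `H¹(I)` with
`‖F‖² ≤ C₁² (sup |f|)²`. -/
theorem heat_time_integral_H1_bound (ℓ T : ℝ) (hℓ : 0 < ℓ) (hT : 0 < T) :
    ∃ C₁ > (0 : ℝ), ∀ t ∈ Set.Ioc (0 : ℝ) T, ∀ y ∈ Set.Ioo (-ℓ) ℓ, ∀ f : ℝ → ℝ,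
      ContinuousOn f (Set.Icc 0 t) →
      let F : ℝ → ℝ := fun x => ∫ s in (0 : ℝ)..t,
        f s * ((Real.sqrt (2 * Real.pi * (t - s)))⁻¹ *
          Real.exp (-(x - y) ^ 2 / (2 * (t - s))))
      Continuous F ∧
      (∀ x : ℝ, x ≠ y → DifferentiableAt ℝ F x) ∧
      (∫ x in Set.Icc (-ℓ) ℓ, ((F x) ^ 2 + (deriv F x) ^ 2))
        ≤ C₁ ^ 2 * (sSup ((fun s => |f s|) '' Set.Icc 0 t)) ^ 2 := by
  refine ⟨Real.sqrt (2 * ℓ * (4 * T + 324)), by positivity, ?_⟩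
  intro t ht y hy f hf F
  obtain ⟨ht0, htT⟩ := ht
  have h0t : (0:ℝ) ≤ t := ht0.le
  set M : ℝ := sSup ((fun s => |f s|) '' Set.Icc 0 t) with hMdef
  -- basic facts about M
  have hfabs : ContinuousOn (fun s => |f s|) (Set.Icc 0 t) := hf.abs
  have hbdd : BddAbove ((fun s => |f s|) '' Set.Icc 0 t) :=
    (isCompact_Icc.image_of_continuousOn hfabs).bddAbove
  have hM : ∀ s ∈ Set.Icc (0:ℝ) t, |f s| ≤ M :=
    fun s hs => le_csSup hbdd (Set.mem_image_of_mem _ hs)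
  have hM0 : 0 ≤ M := le_trans (abs_nonneg _) (hM 0 ⟨le_refl _, h0t⟩)
  -- the integrand and its x-derivative
  set g : ℝ → ℝ → ℝ := fun x s => f s * ((Real.sqrt (2 * π * (t - s)))⁻¹ *
      Real.exp (-(x - y) ^ 2 / (2 * (t - s)))) with hgdef
  set g' : ℝ → ℝ → ℝ := fun x s => f s * ((Real.sqrt (2 * π * (t - s)))⁻¹ *
      Real.exp (-(x - y) ^ 2 / (2 * (t - s))) * (-(x - y) / (t - s))) with hg'def
  have hFg : F = fun x => ∫ s in (0:ℝ)..t, g x s := rfl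
  -- measurability
  have hfm : AEStronglyMeasurable f (volume.restrict (Set.Ioc 0 t)) :=
    (hf.mono Set.Ioc_subset_Icc_self).aestronglyMeasurable measurableSet_Ioc
  have hgm : ∀ x, AEStronglyMeasurable (g x) (volume.restrict (Set.Ioc 0 t)) := by
    intro x
    apply hfm.mul
    apply Measurable.aestronglyMeasurable
    fun_prop
  have hg'm : ∀ x, AEStronglyMeasurable (g' x) (volume.restrict (Set.Ioc 0 t)) := by
    intro x
    apply hfm.mul
    apply Measurable.aestronglyMeasurable
    fun_prop
  -- kernel estimates
  have hker0 : ∀ u e : ℝ, 0 ≤ (Real.sqrt (2 * π * u))⁻¹ * Real.exp e := by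
    intro u e; positivity
  have hker1 : ∀ u e : ℝ, 0 ≤ u → e ≤ 0 →
      (Real.sqrt (2 * π * u))⁻¹ * Real.exp e ≤ (Real.sqrt u)⁻¹ := by
    intro u e hu he
    have hE : Real.exp e ≤ 1 := Real.exp_le_one_iff.2 he
    have h1 : Real.sqrt u ≤ Real.sqrt (2 * π * u) :=
      Real.sqrt_le_sqrt (by nlinarith [Real.pi_gt_three])
    rcases eq_or_lt_of_le hu with h0 | h0
    · rw [← h0]; simp
    · have h2 : (Real.sqrt (2 * π * u))⁻¹ ≤ (Real.sqrt u)⁻¹ :=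
        inv_anti₀ (Real.sqrt_pos.2 h0) h1
      calc (Real.sqrt (2 * π * u))⁻¹ * Real.exp e ≤ (Real.sqrt (2 * π * u))⁻¹ * 1 :=
            mul_le_mul_of_nonneg_left hE (by positivity)
        _ = (Real.sqrt (2 * π * u))⁻¹ := mul_one _
        _ ≤ (Real.sqrt u)⁻¹ := h2
  have hexpneg : ∀ x : ℝ, ∀ s : ℝ, s ≤ t → -(x - y) ^ 2 / (2 * (t - s)) ≤ 0 := by
    intro x s hst
    apply div_nonpos_of_nonpos_of_nonneg (neg_nonpos.2 (sq_nonneg _)) (by linarith)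
  -- pointwise bound for g
  have hker : ∀ x : ℝ, ∀ s ∈ Set.Ioc (0:ℝ) t, ‖g x s‖ ≤ M * (Real.sqrt (t - s))⁻¹ := by
    intro x s hs
    have h1 : ‖g x s‖ = |f s| * ((Real.sqrt (2 * π * (t - s)))⁻¹ *
        Real.exp (-(x - y) ^ 2 / (2 * (t - s)))) := by
      rw [hgdef]
      simp only [Real.norm_eq_abs, abs_mul]
      rw [abs_of_nonneg (inv_nonneg.2 (Real.sqrt_nonneg _)), abs_of_nonneg (Real.exp_pos _).le]
    rw [h1]
    exact mul_le_mul (hM s ⟨hs.1.le, hs.2⟩)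
      (hker1 _ _ (by linarith [hs.2]) (hexpneg x s hs.2)) (hker0 _ _) hM0
  -- integrability of the bound
  have hrw : (fun s : ℝ => (Real.sqrt (t - s))⁻¹) = fun s => (t - s) ^ (-(1/2) : ℝ) :=
    funext fun s => aux_inv_sqrt_eq_rpow _
  have hbint0 : IntervalIntegrable (fun s : ℝ => (Real.sqrt (t - s))⁻¹) volume 0 t := by
    rw [hrw]
    have h1 : IntervalIntegrable (fun u : ℝ => u ^ (-(1/2) : ℝ)) volume 0 t :=
      intervalIntegral.intervalIntegrable_rpow' (by norm_num)
    have h2 := (h1.comp_sub_left t).symm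
    simpa using h2
  have hbint : IntervalIntegrable (fun s => M * (Real.sqrt (t - s))⁻¹) volume 0 t :=
    hbint0.const_mul M
  have hbval0 : (∫ s in (0:ℝ)..t, (Real.sqrt (t - s))⁻¹) = 2 * Real.sqrt t := by
    rw [hrw]
    rw [intervalIntegral.integral_comp_sub_left (fun u : ℝ => u ^ (-(1/2) : ℝ)) t]
    rw [sub_zero, sub_self]
    rw [integral_rpow (Or.inl (by norm_num))]
    rw [Real.sqrt_eq_rpow]
    norm_num
    ring
  have hbval : (∫ s in (0:ℝ)..t, M * (Real.sqrt (t - s))⁻¹) = M * (2 * Real.sqrt t) := by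
    rw [intervalIntegral.integral_const_mul, hbval0]
  have hIoc : Set.uIoc (0:ℝ) t = Set.Ioc 0 t := Set.uIoc_of_le h0t
  -- interval integrability of g x
  have hgint : ∀ x, IntervalIntegrable (g x) volume 0 t := by
    intro x
    rw [intervalIntegrable_iff_integrableOn_Ioc_of_le h0t]
    apply Integrable.mono (hbint.def'.mono_set (by rw [hIoc]))
      (hgm x)
    rw [ae_restrict_iff' measurableSet_Ioc]
    filter_upwards with s hs
    exact (hker x s hs).trans (le_abs_self _)
  -- sup bound for F
  have hFbd : ∀ x, |F x| ≤ M * (2 * Real.sqrt t) := by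
    intro x
    have h1 : ‖∫ s in (0:ℝ)..t, g x s‖ ≤ |∫ s in (0:ℝ)..t, M * (Real.sqrt (t - s))⁻¹| := by
      apply intervalIntegral.norm_integral_le_abs_of_norm_le _ hbint
      rw [hIoc, ae_restrict_iff' measurableSet_Ioc]
      filter_upwards with s hs
      exact hker x s hs
    rw [hbval] at h1
    calc |F x| = ‖∫ s in (0:ℝ)..t, g x s‖ := rfl
      _ ≤ |M * (2 * Real.sqrt t)| := h1
      _ = M * (2 * Real.sqrt t) := abs_of_nonneg (by positivity)
  -- continuity
  have hFcont : Continuous F := by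
    rw [hFg]
    apply intervalIntegral.continuous_of_dominated_interval (bound := fun s => M * (Real.sqrt (t - s))⁻¹)
    · intro x; rw [hIoc]; exact hgm x
    · intro x
      filter_upwards with s hs
      rw [hIoc] at hs
      exact hker x s hs
    · exact hbint
    · filter_upwards with s _
      apply Continuous.mul continuous_const
      apply Continuous.mul continuous_const
      apply Real.continuous_exp.comp
      fun_prop
  -- derivative
  -- almost every point of Ioc is in Ioo
  have hxaene : ∀ᵐ s : ℝ ∂(volume.restrict (Set.Ioc (0:ℝ) t)), s ∈ Set.Ioo (0:ℝ) t := by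
    have h1 : ∀ᵐ s : ℝ ∂volume, s ≠ t := by
      rw [ae_iff]
      have h2 : {s : ℝ | ¬ s ≠ t} = {t} := by ext s; simp
      rw [h2]
      exact Real.volume_singleton
    filter_upwards [ae_restrict_of_ae h1, ae_restrict_mem measurableSet_Ioc] with s hne hmem
    exact ⟨hmem.1, lt_of_le_of_ne hmem.2 hne⟩
  have hnorm' : ∀ x s : ℝ, 0 < t - s → ‖g' x s‖ = |f s| *
      ((Real.sqrt (2 * π * (t - s)))⁻¹ * Real.exp (-(x - y) ^ 2 / (2 * (t - s))) *
        (|x - y| / (t - s))) := by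
    intro x s hst
    rw [hg'def]
    simp only [Real.norm_eq_abs, abs_mul, abs_div, abs_neg]
    rw [abs_of_nonneg (inv_nonneg.2 (Real.sqrt_nonneg _)), abs_of_nonneg (Real.exp_pos _).le,
      abs_of_pos hst]
  -- differentiability away from y
  have hF'int : ∀ x : ℝ, x ≠ y → IntegrableOn (g' x) (Set.Ioc 0 t) volume ∧
      HasDerivAt F (∫ s in Set.Ioc (0:ℝ) t, g' x s) x := by
    intro x₀ hx₀
    have hane₀ : x₀ - y ≠ 0 := sub_ne_zero.2 hx₀
    set δ : ℝ := |x₀ - y| / 2 with hδdef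
    have hδ : 0 < δ := by
      have h1 := abs_pos.2 hane₀
      positivity
    have hgx₀int : Integrable (g x₀) (volume.restrict (Set.Ioc (0:ℝ) t)) := by
      have h1 := hgint x₀
      rw [intervalIntegrable_iff_integrableOn_Ioc_of_le h0t] at h1
      exact h1
    have hbd : ∀ᵐ s ∂(volume.restrict (Set.Ioc (0:ℝ) t)), ∀ x ∈ Metric.ball x₀ δ,
        ‖g' x s‖ ≤ M * (216 * (T * Real.sqrt T) / δ ^ 5) := by
      filter_upwards [hxaene] with s hs
      intro x hxball
      have hu : 0 < t - s := by linarith [hs.2]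
      have haδ : δ ≤ |x - y| := by
        have h1 : |x₀ - y| ≤ |x₀ - x| + |x - y| := abs_sub_le x₀ x y
        have h2 : |x₀ - x| < δ := by
          rw [abs_sub_comm, ← Real.dist_eq]
          exact Metric.mem_ball.1 hxball
        rw [hδdef] at *
        linarith
      have hane : x - y ≠ 0 := by
        have h3 : 0 < |x - y| := lt_of_lt_of_le hδ haδ
        exact abs_pos.1 h3
      rw [hnorm' x s hu]
      have hP := aux_P_far (t - s) (x - y) T hu hane (by linarith [hs.1])
      have h5 : 216 * (T * Real.sqrt T) / |x - y| ^ 5 ≤ 216 * (T * Real.sqrt T) / δ ^ 5 := by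
        gcongr <;> first
          | positivity
          | exact pow_le_pow_left₀ hδ.le haδ 5
      exact mul_le_mul (hM s ⟨hs.1.le, hs.2.le⟩) (hP.trans h5) (by positivity) hM0
    have hbint' : Integrable (fun _ : ℝ => M * (216 * (T * Real.sqrt T) / δ ^ 5))
        (volume.restrict (Set.Ioc (0:ℝ) t)) := by
      exact integrableOn_const measure_Ioc_lt_top.ne
    have hdiff : ∀ᵐ s ∂(volume.restrict (Set.Ioc (0:ℝ) t)), ∀ x ∈ Metric.ball x₀ δ,
        HasDerivAt (fun x => g x s) (g' x s) x := by
      filter_upwards [hxaene] with s hs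
      intro x _
      have hu : 0 < t - s := by linarith [hs.2]
      have h1 : HasDerivAt (fun x : ℝ => x - y) 1 x := (hasDerivAt_id x).sub_const y
      have h2 : HasDerivAt (fun x : ℝ => (x - y) ^ 2) (2 * (x - y)) x := by
        simpa using h1.fun_pow 2
      have h0 : HasDerivAt (fun x : ℝ => -(x - y) ^ 2 / (2 * (t - s)))
          (-(2 * (x - y)) / (2 * (t - s))) x := by
        simpa [neg_div] using h2.neg.div_const (2 * (t - s))
      have h3 := (h0.exp.const_mul ((Real.sqrt (2 * π * (t - s)))⁻¹)).const_mul (f s)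
      have h4 : g' x s = f s * ((Real.sqrt (2 * π * (t - s)))⁻¹ *
          (Real.exp (-(x - y) ^ 2 / (2 * (t - s))) * (-(2 * (x - y)) / (2 * (t - s))))) := by
        rw [hg'def]
        have hu' : (t - s) ≠ 0 := ne_of_gt hu
        field_simp
      rw [h4]
      exact h3
    have main := hasDerivAt_integral_of_dominated_loc_of_deriv_le (Metric.ball_mem_nhds x₀ hδ)
      (Filter.Eventually.of_forall hgm) hgx₀int (hg'm x₀) hbd hbint' hdiff
    have hFeq : F = fun x => ∫ s in Set.Ioc (0:ℝ) t, g x s :=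
      funext fun x => intervalIntegral.integral_of_le h0t
    exact ⟨main.1, hFeq ▸ main.2⟩
  -- bound on the derivative
  have hDbd : ∀ x : ℝ, x ≠ y → |∫ s in Set.Ioc (0:ℝ) t, g' x s| ≤ 18 * M := by
    intro x hx
    have hane : x - y ≠ 0 := sub_ne_zero.2 hx
    have ha2 : 0 < (x - y) ^ 2 := lt_of_le_of_ne (sq_nonneg _) (Ne.symm (pow_ne_zero 2 hane))
    have hint : IntervalIntegrable (g' x) volume 0 t := by
      rw [intervalIntegrable_iff_integrableOn_Ioc_of_le h0t]
      exact (hF'int x hx).1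
    set s₁ : ℝ := max 0 (t - (x - y) ^ 2) with hs₁def
    have hs₁0 : 0 ≤ s₁ := le_max_left _ _
    have hs₁t : s₁ ≤ t := max_le h0t (by linarith)
    have hts₁ : t - s₁ ≤ (x - y) ^ 2 := by
      have h1 := le_max_right 0 (t - (x - y) ^ 2)
      rw [← hs₁def] at h1
      linarith
    have hi1 : IntervalIntegrable (g' x) volume 0 s₁ := by
      apply hint.mono_set
      rw [Set.uIcc_of_le hs₁0, Set.uIcc_of_le h0t]
      exact Set.Icc_subset_Icc le_rfl hs₁t
    have hi2 : IntervalIntegrable (g' x) volume s₁ t := by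
      apply hint.mono_set
      rw [Set.uIcc_of_le hs₁t, Set.uIcc_of_le h0t]
      exact Set.Icc_subset_Icc hs₁0 le_rfl
    have hsplit : (∫ s in Set.Ioc (0:ℝ) t, g' x s) =
        (∫ s in (0:ℝ)..s₁, g' x s) + ∫ s in s₁..t, g' x s := by
      rw [← intervalIntegral.integral_of_le h0t,
        ← intervalIntegral.integral_add_adjacent_intervals hi1 hi2]
    have hpart2 : |∫ s in s₁..t, g' x s| ≤ 16 * M := by
      have hc : ∀ s ∈ Set.uIoc s₁ t, ‖g' x s‖ ≤ M * (16 / (x - y) ^ 2) := by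
        intro s hs
        rw [Set.uIoc_of_le hs₁t] at hs
        rcases eq_or_lt_of_le hs.2 with hst | hst
        · have h0 : g' x s = 0 := by
            rw [hg'def, hst]
            simp
          rw [h0, norm_zero]
          positivity
        · have hu : 0 < t - s := by linarith
          rw [hnorm' x s hu]
          have hP := aux_P_near (t - s) (x - y) hu hane (by linarith [hs.1])
          exact mul_le_mul (hM s ⟨le_trans hs₁0 hs.1.le, hs.2⟩) hP (by positivity) hM0
      have h1 := intervalIntegral.norm_integral_le_of_norm_le_const hc
      rw [Real.norm_eq_abs] at h1
      have h2 : M * (16 / (x - y) ^ 2) * |t - s₁| ≤ 16 * M := by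
        rw [abs_of_nonneg (by linarith : (0:ℝ) ≤ t - s₁)]
        calc M * (16 / (x - y) ^ 2) * (t - s₁)
            ≤ M * (16 / (x - y) ^ 2) * (x - y) ^ 2 :=
              mul_le_mul_of_nonneg_left hts₁ (by positivity)
          _ = 16 * M := by field_simp
      linarith
    have hpart1 : |∫ s in (0:ℝ)..s₁, g' x s| ≤ 2 * M := by
      by_cases hcase : t ≤ (x - y) ^ 2
      · have h0 : s₁ = 0 := max_eq_left (by linarith)
        rw [h0, intervalIntegral.integral_same, abs_zero]
        positivity
      · push_neg at hcase
        have hs₁eq : s₁ = t - (x - y) ^ 2 := max_eq_right (by linarith)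
        have hts₁' : t - s₁ = (x - y) ^ 2 := by rw [hs₁eq]; ring
        have hgbi : IntervalIntegrable
            (fun s => M * |x - y| * ((t - s) ^ (-(3/2) : ℝ))) volume 0 s₁ := by
          apply ContinuousOn.intervalIntegrable
          apply ContinuousOn.mul continuousOn_const
          apply ContinuousOn.rpow_const (continuousOn_const.sub continuousOn_id)
          intro s hs
          left
          rw [Set.uIcc_of_le hs₁0] at hs
          have h9 : s ≤ s₁ := hs.2
          have h10 : (x - y) ^ 2 ≤ t - s := by rw [hs₁eq] at h9; linarith
          exact ne_of_gt (lt_of_lt_of_le ha2 h10)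
        have hptw : ∀ᵐ s ∂volume.restrict (Set.uIoc 0 s₁),
            ‖g' x s‖ ≤ M * |x - y| * ((t - s) ^ (-(3/2) : ℝ)) := by
          rw [Set.uIoc_of_le hs₁0, ae_restrict_iff' measurableSet_Ioc]
          filter_upwards with s hs
          have h9 : s ≤ s₁ := hs.2
          have h10 : (x - y) ^ 2 ≤ t - s := by rw [hs₁eq] at h9; linarith
          have hu : 0 < t - s := lt_of_lt_of_le ha2 h10
          rw [hnorm' x s hu]
          have hP := aux_P_mid (t - s) (x - y) hu
          have hrpow : (t - s) ^ (-(3/2) : ℝ) =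
              (Real.sqrt (t - s))⁻¹ * (t - s)⁻¹ := by
            rw [show (-(3/2) : ℝ) = (-(1/2)) + (-1) by norm_num, Real.rpow_add hu,
              Real.rpow_neg_one, ← aux_inv_sqrt_eq_rpow]
          rw [hrpow]
          calc |f s| * ((Real.sqrt (2 * π * (t - s)))⁻¹ *
                Real.exp (-(x - y) ^ 2 / (2 * (t - s))) * (|x - y| / (t - s)))
              ≤ M * (|x - y| * ((Real.sqrt (t - s))⁻¹ * (t - s)⁻¹)) :=
                mul_le_mul (hM s ⟨hs.1.le, h9.trans hs₁t⟩) hP (by positivity) hM0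
            _ = M * |x - y| * ((Real.sqrt (t - s))⁻¹ * (t - s)⁻¹) := by ring
        have hnb := intervalIntegral.norm_integral_le_abs_of_norm_le hptw hgbi
        rw [Real.norm_eq_abs] at hnb
        have hIcomp : (∫ s in (0:ℝ)..s₁, ((t - s) ^ (-(3/2) : ℝ))) =
            2 * (|x - y|⁻¹ - (Real.sqrt t)⁻¹) := by
          rw [intervalIntegral.integral_comp_sub_left (fun u : ℝ => u ^ (-(3/2) : ℝ)) t]
          rw [sub_zero, hts₁']
          rw [integral_rpow (Or.inr ⟨by norm_num, by
            rw [Set.uIcc_of_le (le_of_lt hcase)]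
            intro h
            exact absurd h.1 (not_le.2 ha2)⟩)]
          rw [show ((-(3/2) : ℝ) + 1) = -(1/2) by norm_num]
          rw [← aux_inv_sqrt_eq_rpow, ← aux_inv_sqrt_eq_rpow, Real.sqrt_sq_eq_abs]
          ring
        have hia : 0 < |x - y| := abs_pos.2 hane
        have habs : |x - y| ≤ Real.sqrt t := by
          rw [← Real.sqrt_sq_eq_abs]
          exact Real.sqrt_le_sqrt hcase.le
        have hle : (Real.sqrt t)⁻¹ ≤ |x - y|⁻¹ := inv_anti₀ hia habs
        have hval : |∫ s in (0:ℝ)..s₁, M * |x - y| * ((t - s) ^ (-(3/2) : ℝ))| ≤ 2 * M := by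
          rw [intervalIntegral.integral_const_mul, hIcomp, abs_mul]
          rw [abs_of_nonneg (by positivity : (0:ℝ) ≤ M * |x - y|)]
          have h0le : (0:ℝ) ≤ 2 * (|x - y|⁻¹ - (Real.sqrt t)⁻¹) := by linarith
          rw [abs_of_nonneg h0le]
          have hstep : M * |x - y| * (2 * (|x - y|⁻¹ - (Real.sqrt t)⁻¹))
              ≤ M * |x - y| * (2 * |x - y|⁻¹) := by
            apply mul_le_mul_of_nonneg_left _ (by positivity)
            have := inv_nonneg.2 (Real.sqrt_nonneg t)
            linarith
          calc M * |x - y| * (2 * (|x - y|⁻¹ - (Real.sqrt t)⁻¹))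
              ≤ M * |x - y| * (2 * |x - y|⁻¹) := hstep
            _ = 2 * M := by field_simp
        linarith
    calc |∫ s in Set.Ioc (0:ℝ) t, g' x s|
        = |(∫ s in (0:ℝ)..s₁, g' x s) + ∫ s in s₁..t, g' x s| := by rw [hsplit]
      _ ≤ |∫ s in (0:ℝ)..s₁, g' x s| + |∫ s in s₁..t, g' x s| := abs_add_le _ _
      _ ≤ 2 * M + 16 * M := add_le_add hpart1 hpart2
      _ = 18 * M := by ring
  refine ⟨hFcont, fun x hx => ((hF'int x hx).2).differentiableAt, ?_⟩
  -- final integral estimate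
  have hxaey : ∀ᵐ x : ℝ ∂volume, x ≠ y := by
    rw [ae_iff]
    have h2 : {x : ℝ | ¬ x ≠ y} = {y} := by ext x; simp
    rw [h2]
    exact Real.volume_singleton
  have hbd2 : ∀ᵐ x : ℝ ∂volume, x ∈ Set.Icc (-ℓ) ℓ →
      ‖F x ^ 2 + deriv F x ^ 2‖ ≤ (4 * T + 324) * M ^ 2 := by
    filter_upwards [hxaey] with x hx _
    have hd := (hF'int x hx).2
    have hdb := hDbd x hx
    have hder : deriv F x = ∫ s in Set.Ioc (0:ℝ) t, g' x s := hd.deriv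
    rw [Real.norm_eq_abs, abs_of_nonneg (by positivity)]
    have h1 : F x ^ 2 ≤ 4 * T * M ^ 2 := by
      nlinarith [hFbd x, abs_nonneg (F x), Real.sq_sqrt h0t, Real.sqrt_nonneg t,
        hM0, htT, sq_nonneg M, sq_abs (F x)]
    have h2 : deriv F x ^ 2 ≤ 324 * M ^ 2 := by
      rw [hder]
      nlinarith [hdb, abs_nonneg (∫ s in Set.Ioc (0:ℝ) t, g' x s), hM0,
        sq_abs (∫ s in Set.Ioc (0:ℝ) t, g' x s)]
    linarith
  calc (∫ x in Set.Icc (-ℓ) ℓ, (F x ^ 2 + deriv F x ^ 2))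
      ≤ |∫ x in Set.Icc (-ℓ) ℓ, (F x ^ 2 + deriv F x ^ 2)| := le_abs_self _
    _ = ‖∫ x in Set.Icc (-ℓ) ℓ, (F x ^ 2 + deriv F x ^ 2)‖ := (Real.norm_eq_abs _).symm
    _ ≤ ((4 * T + 324) * M ^ 2) * (volume (Set.Icc (-ℓ) ℓ)).toReal :=
        norm_setIntegral_le_of_norm_le_const_ae'
          (by rw [Real.volume_Icc]; exact ENNReal.ofReal_lt_top) hbd2
    _ = ((4 * T + 324) * M ^ 2) * (2 * ℓ) := by
        rw [Real.volume_Icc, ENNReal.toReal_ofReal (by linarith)]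
        ring
    _ ≤ Real.sqrt (2 * ℓ * (4 * T + 324)) ^ 2 * M ^ 2 := by
        rw [Real.sq_sqrt (by positivity)]
        nlinarith [sq_nonneg M]
end

section
/- Fix ℓ > 0 and let I = [−ℓ, ℓ]. For every bounded measurable function f : I → ℝ, every t > 0 and every x ∈ ℝ, one has | ∫_{−ℓ}^{ℓ} f(y) · (x−y) · ( ∫₀ᵗ (2π(t−s)³)^{−1/2} · exp(−(x−y)²/(2(t−s))) ds ) dy | ≤ 2ℓ · sup_{y∈I} |f(y)|. -/
/-!
For `a ≠ 0`, `u ↦ |a| (2πu³)^{-1/2} exp(-a²/(2u))` is the Lévy density (the law of the first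
time a Brownian motion hits `a`), so its integral over `(0, t]` is at most `1`. Concretely, the
substitution `u = a²/(2v²)` turns `|a| ∫₀ᵗ` into `(2/√π) ∫_{|a|/√(2t)}^∞ exp(-v²) ≤ 1`. Hence the
integrand in `y` is bounded by `sup |f|`, and the integral over `[-ℓ, ℓ]` by `2ℓ sup |f|`.
-/

open MeasureTheory Real Set

lemma setIntegral_Ici_exp_neg_sq_le {c : ℝ} (hc : 0 ≤ c) :
    ∫ v in Ici c, exp (-v ^ 2) ≤ √π / 2 := by
  have hgauss : ∫ v in Ioi (0 : ℝ), exp (-v ^ 2) = √π / 2 := by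
    simpa using integral_gaussian_Ioi 1
  rw [← hgauss, integral_Ici_eq_integral_Ioi]
  refine setIntegral_mono_set ?_ (.of_forall fun v => (exp_pos _).le)
    (Ioi_subset_Ioi hc).eventuallyLE
  simpa using (integrable_exp_neg_mul_sq one_pos).integrableOn (s := Ioi 0)

lemma hasDerivAt_sq_div_two_mul_sq (a : ℝ) {v : ℝ} (hv : v ≠ 0) :
    HasDerivAt (fun v => a ^ 2 / (2 * v ^ 2)) (-a ^ 2 / v ^ 3) v := by
  refine ((hasDerivAt_const v (a ^ 2)).div ((hasDerivAt_pow 2 v).const_mul 2)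
    (by positivity)).congr_deriv ?_
  field_simp
  ring

lemma sq_div_two_mul_sq_injOn {a : ℝ} (ha : a ≠ 0) :
    InjOn (fun v : ℝ => a ^ 2 / (2 * v ^ 2)) (Ioi 0) := by
  intro v hv w hw h
  have hsq : (2 * v ^ 2)⁻¹ = (2 * w ^ 2)⁻¹ :=
    mul_left_cancel₀ (pow_ne_zero 2 ha) (by simpa only [div_eq_mul_inv] using h)
  rw [inv_inj] at hsq
  exact (pow_left_inj₀ (le_of_lt hv) (le_of_lt hw) two_ne_zero).1 (by linarith)

lemma image_sq_div_two_mul_sq_Ici {a t : ℝ} (ha : a ≠ 0) (ht : 0 < t) :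
    (fun v => a ^ 2 / (2 * v ^ 2)) '' Ici (|a| / √(2 * t)) = Ioc 0 t := by
  have hc : 0 < |a| / √(2 * t) := by positivity
  ext u
  constructor
  · rintro ⟨v, hv, rfl⟩
    have hv0 : 0 < v := hc.trans_le hv
    refine ⟨by positivity, ?_⟩
    calc a ^ 2 / (2 * v ^ 2) ≤ a ^ 2 / (2 * (|a| / √(2 * t)) ^ 2) := by gcongr; exact hv
      _ = t := by
        rw [div_pow, sq_abs, sq_sqrt (by positivity)]
        field_simp
  · rintro ⟨hu, hut⟩
    refine ⟨|a| / √(2 * u), mem_Ici.2 (by gcongr), ?_⟩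
    dsimp only
    rw [div_pow, sq_abs, sq_sqrt (by positivity)]
    field_simp

/-- `q_u(a) / u`, with `q` the Gaussian heat kernel. -/
noncomputable def heatKernelDivTime (a u : ℝ) : ℝ :=
  (√(2 * π * u ^ 3))⁻¹ * exp (-a ^ 2 / (2 * u))

lemma abs_deriv_mul_heatKernelDivTime {a v : ℝ} (ha : a ≠ 0) (hv : 0 < v) :
    |-a ^ 2 / v ^ 3| * heatKernelDivTime a (a ^ 2 / (2 * v ^ 2)) =
      2 / (|a| * √π) * exp (-v ^ 2) := by
  have hsqrt : √(2 * π * (a ^ 2 / (2 * v ^ 2)) ^ 3) = √π * |a| ^ 3 / (2 * v ^ 3) := by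
    rw [← sqrt_sq (by positivity : 0 ≤ √π * |a| ^ 3 / (2 * v ^ 3))]
    congr 1
    have hpow : (|a| ^ 3) ^ 2 = (a ^ 2) ^ 3 := by rw [← pow_mul, mul_comm, pow_mul, sq_abs]
    simp only [div_pow, mul_pow, sq_sqrt pi_pos.le, hpow]
    field_simp
  rw [heatKernelDivTime, hsqrt, abs_div, abs_neg, abs_of_pos (pow_pos hv 3),
    abs_of_nonneg (sq_nonneg a), ← sq_abs a]
  have hexp : -|a| ^ 2 / (2 * (|a| ^ 2 / (2 * v ^ 2))) = -v ^ 2 := by field_simp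
  rw [hexp]
  field_simp

lemma integral_heatKernelDivTime_eq {a t : ℝ} (ha : a ≠ 0) (ht : 0 < t) :
    ∫ s in (0 : ℝ)..t, heatKernelDivTime a (t - s) =
      2 / (|a| * √π) * ∫ v in Ici (|a| / √(2 * t)), exp (-v ^ 2) := by
  have hc : 0 < |a| / √(2 * t) := by positivity
  calc ∫ s in (0 : ℝ)..t, heatKernelDivTime a (t - s)
      = ∫ u in Ioc 0 t, heatKernelDivTime a u := by
        rw [intervalIntegral.integral_comp_sub_left, sub_self, sub_zero,
          intervalIntegral.integral_of_le ht.le]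
    _ = ∫ v in Ici (|a| / √(2 * t)),
          |-a ^ 2 / v ^ 3| • heatKernelDivTime a (a ^ 2 / (2 * v ^ 2)) := by
        rw [← image_sq_div_two_mul_sq_Ici ha ht]
        exact integral_image_eq_integral_abs_deriv_smul measurableSet_Ici
          (fun v hv => (hasDerivAt_sq_div_two_mul_sq a (hc.trans_le hv).ne').hasDerivWithinAt)
          ((sq_div_two_mul_sq_injOn ha).mono (Ici_subset_Ioi.2 hc)) _
    _ = ∫ v in Ici (|a| / √(2 * t)), 2 / (|a| * √π) * exp (-v ^ 2) :=
        setIntegral_congr_fun measurableSet_Ici fun v hv =>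
          abs_deriv_mul_heatKernelDivTime ha (hc.trans_le hv)
    _ = _ := integral_const_mul _ _

lemma abs_mul_integral_heatKernelDivTime_le_one (a : ℝ) {t : ℝ} (ht : 0 < t) :
    |a * ∫ s in (0 : ℝ)..t, heatKernelDivTime a (t - s)| ≤ 1 := by
  rcases eq_or_ne a 0 with rfl | ha
  · simp
  have hc : 0 ≤ |a| / √(2 * t) := by positivity
  have hI : 0 ≤ ∫ v in Ici (|a| / √(2 * t)), exp (-v ^ 2) :=
    setIntegral_nonneg measurableSet_Ici fun v _ => (exp_pos _).le
  rw [integral_heatKernelDivTime_eq ha ht, abs_mul,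
    abs_of_nonneg (mul_nonneg (by positivity) hI)]
  calc |a| * (2 / (|a| * √π) * ∫ v in Ici (|a| / √(2 * t)), exp (-v ^ 2))
      ≤ |a| * (2 / (|a| * √π) * (√π / 2)) := by
        gcongr
        exact setIntegral_Ici_exp_neg_sq_le hc
    _ = 1 := by field_simp

theorem heat_kernel_deriv_convolution_bound_general (ℓ : ℝ) (hℓ : 0 < ℓ)
    (f : ℝ → ℝ)
    (hbdd : BddAbove ((fun y => |f y|) '' Set.Icc (-ℓ) ℓ))
    (t : ℝ) (ht : 0 < t) (x : ℝ) :
    |∫ y in (-ℓ)..ℓ, f y * (x - y) *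
        (∫ s in (0 : ℝ)..t,
          (Real.sqrt (2 * Real.pi * (t - s) ^ 3))⁻¹ *
            Real.exp (-(x - y) ^ 2 / (2 * (t - s))))|
      ≤ 2 * ℓ * sSup ((fun y => |f y|) '' Set.Icc (-ℓ) ℓ) := by
  set M := sSup ((fun y => |f y|) '' Icc (-ℓ) ℓ)
  have hpointwise : ∀ y ∈ uIoc (-ℓ) ℓ,
      ‖f y * (x - y) * ∫ s in (0 : ℝ)..t, heatKernelDivTime (x - y) (t - s)‖ ≤ M := by
    intro y hy
    rw [uIoc_of_le (by linarith)] at hy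
    have hfy : |f y| ≤ M := le_csSup hbdd ⟨y, Ioc_subset_Icc_self hy, rfl⟩
    calc ‖f y * (x - y) * ∫ s in (0 : ℝ)..t, heatKernelDivTime (x - y) (t - s)‖
        = |f y| * |(x - y) * ∫ s in (0 : ℝ)..t, heatKernelDivTime (x - y) (t - s)| := by
          rw [mul_assoc, norm_eq_abs, abs_mul]
      _ ≤ M * 1 := mul_le_mul hfy (abs_mul_integral_heatKernelDivTime_le_one _ ht)
          (abs_nonneg _) ((abs_nonneg _).trans hfy)
      _ = M := mul_one M
  calc _ ≤ M * |ℓ - -ℓ| := intervalIntegral.norm_integral_le_of_norm_le_const hpointwise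
    _ = 2 * ℓ * M := by
      rw [abs_of_pos (by linarith)]
      ring

/-- Core estimate in the proof of Lemma 3.6: for bounded measurable `f` on
`I = [-ℓ,ℓ]`, all `t > 0` and `x ∈ ℝ`,
`|∫_I f(y) (x-y) (∫₀ᵗ (2π(t-s)³)^{-1/2} exp(-(x-y)²/(2(t-s))) ds) dy| ≤ 2ℓ sup_I |f|`. -/
theorem heat_kernel_deriv_convolution_bound (ℓ : ℝ) (hℓ : 0 < ℓ)
    (f : ℝ → ℝ) (hmeas : Measurable f)
    (hbdd : BddAbove ((fun y => |f y|) '' Set.Icc (-ℓ) ℓ))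
    (t : ℝ) (ht : 0 < t) (x : ℝ) :
    |∫ y in (-ℓ)..ℓ, f y * (x - y) *
        (∫ s in (0 : ℝ)..t,
          (Real.sqrt (2 * Real.pi * (t - s) ^ 3))⁻¹ *
            Real.exp (-(x - y) ^ 2 / (2 * (t - s))))|
      ≤ 2 * ℓ * sSup ((fun y => |f y|) '' Set.Icc (-ℓ) ℓ) :=
  heat_kernel_deriv_convolution_bound_general ℓ hℓ f hbdd t ht x
end

section
/- Fix ℓ > 0, let I = [−ℓ, ℓ], and let M > 0. Let α : ℝ → ℝ satisfy sup |α| ≤ M and be Lipschitz with constant at most M. Then there is a constant C > 0, depending only on M and ℓ, such that for all Lipschitz functions θ, V : ℝ → ℝ with ∫_I θ² + (θ′)² dμ ≤ 1, one has ∫_I (θ·(α∘V))² + ((θ·(α∘V))′)² dμ ≤ C² · (1 + ∫_I V² + (V′)² dμ), where primes denote almost-everywhere derivatives and μ is Lebesgue measure on I. -/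
open MeasureTheory Real Set
open scoped NNReal

/-!
In one dimension the `H¹` norm controls the sup norm: if `θ(y₀)²` is at most the average of `θ²`,
then `θ(x)² - θ(y₀)² = ∫ 2θθ'` by the fundamental theorem of calculus for absolutely continuous
functions, and `2|θθ'| ≤ θ² + θ'²`; hence `θ² ≤ (2ℓ)⁻¹ + 1` on `[-ℓ, ℓ]`. Almost everywhere the
product rule holds and `|(α ∘ V)'| ≤ M |V'|`, giving the pointwise bound
`(θ α(V))² + ((θ α(V))')² ≤ 2M² (θ² + θ'²) + 2M² θ² V'²`, which integrates to the claim with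
`C = M √(2 (2 + (2ℓ)⁻¹))`.
-/

theorem LipschitzWith.abs_deriv_comp_le {α V : ℝ → ℝ} {K : ℝ≥0} {x : ℝ}
    (hα : LipschitzWith K α) (hV : DifferentiableAt ℝ V x)
    (hαV : DifferentiableAt ℝ (α ∘ V) x) : |deriv (α ∘ V) x| ≤ K * |deriv V x| := by
  refine le_of_tendsto_of_tendsto' (hasDerivAt_iff_tendsto_slope.1 hαV.hasDerivAt).abs
    ((hasDerivAt_iff_tendsto_slope.1 hV.hasDerivAt).abs.const_mul (K : ℝ)) fun y => ?_
  simp only [slope_def_field, abs_div, ← mul_div_assoc, Function.comp_apply]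
  gcongr
  simpa [Real.dist_eq] using hα.dist_le_mul (V y) (V x)

theorem LipschitzWith.integrableOn_deriv_sq {f : ℝ → ℝ} {K : ℝ≥0} (hf : LipschitzWith K f)
    (a b : ℝ) : IntegrableOn (fun x => deriv f x ^ 2) (Icc a b) := by
  refine Measure.integrableOn_of_bounded (M := (K : ℝ) ^ 2) measure_Icc_lt_top.ne
    ((measurable_deriv f).pow_const 2).aestronglyMeasurable (ae_of_all _ fun x => ?_)
  rw [norm_pow, Real.norm_eq_abs]
  gcongr
  exact norm_deriv_le_of_lipschitz hf

theorem LipschitzWith.integrableOn_sq_add_deriv_sq {f : ℝ → ℝ} {K : ℝ≥0}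
    (hf : LipschitzWith K f) (a b : ℝ) :
    IntegrableOn (fun x => f x ^ 2 + deriv f x ^ 2) (Icc a b) :=
  (hf.continuous.pow 2).integrableOn_Icc.add (hf.integrableOn_deriv_sq a b)

theorem AbsolutelyContinuousOnInterval.sq_le_mul_integral_sq_add_deriv_sq {θ : ℝ → ℝ}
    {a b x : ℝ} (hθ : AbsolutelyContinuousOnInterval θ a b) (hab : a < b)
    (hθ' : IntegrableOn (fun x => deriv θ x ^ 2) (Icc a b)) (hx : x ∈ Icc a b) :
    θ x ^ 2 ≤ ((b - a)⁻¹ + 1) * ∫ y in Icc a b, θ y ^ 2 + deriv θ y ^ 2 := by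
  have hI : uIcc a b = Icc a b := uIcc_of_le hab.le
  have hθ2 : IntegrableOn (fun y => θ y ^ 2) (Icc a b) :=
    (hI ▸ hθ.continuousOn).pow 2 |>.integrableOn_Icc
  have hE : IntegrableOn (fun y => θ y ^ 2 + deriv θ y ^ 2) (Icc a b) := hθ2.add hθ'
  set E := ∫ y in Icc a b, θ y ^ 2 + deriv θ y ^ 2
  have hE0 : 0 ≤ E := setIntegral_nonneg measurableSet_Icc fun y _ => by positivity
  obtain ⟨y₀, hy₀, hy₀le⟩ := exists_le_setAverage (by simp [hab]) (by simp) hθ2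
  have hy₀E : θ y₀ ^ 2 ≤ (b - a)⁻¹ * E := by
    rw [setAverage_eq, Real.volume_real_Icc_of_le hab.le, smul_eq_mul] at hy₀le
    refine hy₀le.trans (mul_le_mul_of_nonneg_left ?_ (by simp [hab.le]))
    exact setIntegral_mono_on hθ2 hE measurableSet_Icc fun y _ =>
      le_add_of_nonneg_right (sq_nonneg _)
  have hdiff : θ x ^ 2 - θ y₀ ^ 2 ≤ E := by
    have hsub : uIcc y₀ x ⊆ uIcc a b := hI ▸ (ordConnected_Icc.uIcc_subset hy₀ hx)
    have hftc := (hθ.mono hsub).integral_deriv_mul_eq_sub (hθ.mono hsub)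
    have hbound : ∀ y, |deriv θ y * θ y + θ y * deriv θ y| ≤ θ y ^ 2 + deriv θ y ^ 2 := by
      intro y
      rw [abs_le]
      constructor <;> nlinarith [sq_nonneg (θ y + deriv θ y), sq_nonneg (θ y - deriv θ y)]
    have huIoc : uIoc y₀ x ⊆ Icc a b := uIoc_subset_uIcc.trans (hI ▸ hsub)
    calc θ x ^ 2 - θ y₀ ^ 2 = ∫ y in y₀..x, deriv θ y * θ y + θ y * deriv θ y := by
          rw [hftc]; ring
      _ ≤ ∫ y in uIoc y₀ x, |deriv θ y * θ y + θ y * deriv θ y| := by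
          refine (le_abs_self _).trans ?_
          simpa only [Real.norm_eq_abs] using
            intervalIntegral.norm_integral_le_integral_norm_uIoc (E := ℝ) (μ := volume)
      _ ≤ ∫ y in uIoc y₀ x, θ y ^ 2 + deriv θ y ^ 2 :=
          integral_mono_of_nonneg (ae_of_all _ fun _ => abs_nonneg _) (hE.mono_set huIoc)
            (ae_of_all _ hbound)
      _ ≤ E := setIntegral_mono_set hE (ae_of_all _ fun y => by positivity) huIoc.eventuallyLE
  nlinarith

theorem sq_mul_add_sq_add_mul_le {t t' a a' v' A K : ℝ} (ha : |a| ≤ A)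
    (ha' : |a'| ≤ K * |v'|) :
    (t * a) ^ 2 + (t' * a + t * a') ^ 2 ≤
      2 * A ^ 2 * (t ^ 2 + t' ^ 2) + 2 * K ^ 2 * t ^ 2 * v' ^ 2 := by
  have ha2 : a ^ 2 ≤ A ^ 2 := sq_le_sq' (abs_le.1 ha).1 (abs_le.1 ha).2
  have ha'2 : a' ^ 2 ≤ K ^ 2 * v' ^ 2 := by
    simpa only [mul_pow, sq_abs] using pow_le_pow_left₀ (abs_nonneg a') ha' 2
  nlinarith [sq_nonneg (t' * a - t * a'), mul_le_mul_of_nonneg_left ha2 (sq_nonneg t),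
    mul_le_mul_of_nonneg_left ha2 (sq_nonneg t'), mul_le_mul_of_nonneg_left ha'2 (sq_nonneg t)]

theorem ae_sq_mul_comp_add_deriv_sq_le {α θ V : ℝ → ℝ} {A : ℝ} {K Kθ KV : ℝ≥0}
    (hαA : ∀ y, |α y| ≤ A) (hα : LipschitzWith K α) (hθ : LipschitzWith Kθ θ)
    (hV : LipschitzWith KV V) :
    ∀ᵐ x, (θ x * α (V x)) ^ 2 + deriv (fun y => θ y * α (V y)) x ^ 2 ≤
      2 * A ^ 2 * (θ x ^ 2 + deriv θ x ^ 2) + 2 * K ^ 2 * θ x ^ 2 * deriv V x ^ 2 := by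
  filter_upwards [hθ.ae_differentiableAt_real, hV.ae_differentiableAt_real,
    (hα.comp hV).ae_differentiableAt_real] with x hθx hVx hαVx
  have hderiv :
      deriv (fun y => θ y * α (V y)) x = deriv θ x * α (V x) + θ x * deriv (α ∘ V) x :=
    (hθx.hasDerivAt.mul hαVx.hasDerivAt).deriv
  rw [hderiv]
  exact sq_mul_add_sq_add_mul_le (hαA (V x)) (hα.abs_deriv_comp_le hVx hαVx)

/-- Key estimate inside Lemma 4.6: for `α` bounded by `M` and Lipschitz with
constant at most `M`, there is `C > 0` depending only on `M` and `ℓ` such that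
for all Lipschitz test functions `θ` with `∫_I θ² + (θ')² ≤ 1` and all Lipschitz
potentials `V`,
`∫_I (θ·(α∘V))² + ((θ·(α∘V))')² ≤ C² (1 + ∫_I V² + (V')²)`. -/
theorem product_with_rate_H1_bound (ℓ M : ℝ) (hℓ : 0 < ℓ) (hM : 0 < M) :
    ∃ C > (0 : ℝ), ∀ (α θ V : ℝ → ℝ) (Kθ KV : NNReal),
      (∀ x : ℝ, |α x| ≤ M) → LipschitzWith (Real.toNNReal M) α →
      LipschitzWith Kθ θ → LipschitzWith KV V →
      (∫ x in Set.Icc (-ℓ) ℓ, ((θ x) ^ 2 + (deriv θ x) ^ 2)) ≤ 1 →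
      (∫ x in Set.Icc (-ℓ) ℓ,
          ((θ x * α (V x)) ^ 2 + (deriv (fun y => θ y * α (V y)) x) ^ 2))
        ≤ C ^ 2 * (1 + ∫ x in Set.Icc (-ℓ) ℓ, ((V x) ^ 2 + (deriv V x) ^ 2)) := by
  set S : ℝ := (2 * ℓ)⁻¹ + 1
  have hS : 0 < S := by positivity
  refine ⟨M * √(2 * (1 + S)), by positivity, fun α θ V Kθ KV hαM hα hθ hV hθ1 => ?_⟩
  set I := Icc (-ℓ) ℓ
  set EV := ∫ x in I, V x ^ 2 + deriv V x ^ 2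
  have hEV : 0 ≤ EV := setIntegral_nonneg measurableSet_Icc fun y _ => by positivity
  have hθS : ∀ x ∈ I, θ x ^ 2 ≤ S := fun x hx => by
    have := hθ.lipschitzOnWith.absolutelyContinuousOnInterval.sq_le_mul_integral_sq_add_deriv_sq
      (by linarith) (hθ.integrableOn_deriv_sq _ _) hx
    rw [show ℓ - -ℓ = 2 * ℓ by ring] at this
    exact this.trans (mul_le_of_le_one_right hS.le hθ1)
  have hbound : ∀ᵐ x ∂volume.restrict I,
      (θ x * α (V x)) ^ 2 + deriv (fun y => θ y * α (V y)) x ^ 2 ≤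
        2 * M ^ 2 * (θ x ^ 2 + deriv θ x ^ 2) + 2 * M ^ 2 * S * (V x ^ 2 + deriv V x ^ 2) := by
    rw [ae_restrict_iff' measurableSet_Icc]
    filter_upwards [ae_sq_mul_comp_add_deriv_sq_le hαM hα hθ hV] with x hx hxI
    rw [Real.coe_toNNReal M hM.le] at hx
    refine hx.trans (add_le_add_right ?_ _)
    have hθV : θ x ^ 2 * deriv V x ^ 2 ≤ S * (V x ^ 2 + deriv V x ^ 2) :=
      mul_le_mul (hθS x hxI) (le_add_of_nonneg_left (sq_nonneg (V x))) (sq_nonneg _) hS.le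
    nlinarith [mul_le_mul_of_nonneg_left hθV (sq_nonneg M)]
  have hθi := hθ.integrableOn_sq_add_deriv_sq (-ℓ) ℓ
  have hVi := hV.integrableOn_sq_add_deriv_sq (-ℓ) ℓ
  calc _ ≤ ∫ x in I, 2 * M ^ 2 * (θ x ^ 2 + deriv θ x ^ 2) +
          2 * M ^ 2 * S * (V x ^ 2 + deriv V x ^ 2) :=
        integral_mono_of_nonneg (ae_of_all _ fun x => by positivity)
          ((hθi.const_mul _).add (hVi.const_mul _)) hbound
    _ = 2 * M ^ 2 * (∫ x in I, θ x ^ 2 + deriv θ x ^ 2) + 2 * M ^ 2 * S * EV := by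
        rw [integral_add (hθi.const_mul _) (hVi.const_mul _), integral_const_mul,
          integral_const_mul]
    _ ≤ (M * √(2 * (1 + S))) ^ 2 * (1 + EV) := by
        rw [mul_pow, sq_sqrt (by positivity)]
        nlinarith [mul_nonneg (sq_nonneg M) hEV, mul_le_mul_of_nonneg_left hθ1 (sq_nonneg M)]
end

section
/- Let λ be a finite (nonnegative) Borel measure on ℝ and let u > 0. Then ( ∫_ℝ ( ∫_ℝ ((x−y)/u) · (2πu)^{−1/2} · exp(−(x−y)²/(2u)) dλ(y) )² dx )^{1/2} ≤ ( u^{−3/4} / (2π^{1/4}) ) · λ(ℝ). -/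
open MeasureTheory Real
open scoped ENNReal

/-!
By Minkowski's integral inequality and translation invariance of Lebesgue measure, the `L²` norm
of `x ↦ ∫ k (x - y) dλ(y)` is at most `‖k‖_{L²} · λ(ℝ)`. For `k = -∂ₓ p_u`, a Gaussian second
moment computation gives `‖k‖²_{L²} = u^{-3/2} / (4 √π)`.
-/

section Minkowski

variable {α β : Type*} [MeasurableSpace α] [MeasurableSpace β]
  {ν : Measure α} {μ : Measure β} [SFinite ν] [SFinite μ]

/-- Minkowski's integral inequality for `p = 2`: expand the square as an integral over `μ ⊗ μ`
and apply Cauchy–Schwarz in `x`. -/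
theorem lintegral_sq_lintegral_le (f : α → β → ℝ≥0∞) (hf : Measurable (Function.uncurry f)) :
    ∫⁻ x, (∫⁻ y, f x y ∂μ) ^ 2 ∂ν ≤ (∫⁻ y, (∫⁻ x, f x y ^ 2 ∂ν) ^ (1 / 2 : ℝ) ∂μ) ^ 2 := by
  set N : β → ℝ≥0∞ := fun y => (∫⁻ x, f x y ^ 2 ∂ν) ^ (1 / 2 : ℝ)
  have hf_left : ∀ x, Measurable (f x) := fun x => hf.comp measurable_prodMk_left
  have hf_right : ∀ y, Measurable (f · y) := fun y => hf.comp measurable_prodMk_right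
  have hN : Measurable N := ((hf.pow_const 2).lintegral_prod_left').pow_const _
  calc ∫⁻ x, (∫⁻ y, f x y ∂μ) ^ 2 ∂ν
      = ∫⁻ x, ∫⁻ p, f x p.1 * f x p.2 ∂μ.prod μ ∂ν := by
        refine lintegral_congr fun x => ?_
        rw [lintegral_prod_mul (hf_left x).aemeasurable (hf_left x).aemeasurable, sq]
    _ = ∫⁻ p, ∫⁻ x, f x p.1 * f x p.2 ∂ν ∂μ.prod μ :=
        lintegral_lintegral_swap (by fun_prop)
    _ ≤ ∫⁻ p, N p.1 * N p.2 ∂μ.prod μ := by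
        refine lintegral_mono fun p => ?_
        simpa only [ENNReal.rpow_two, Pi.mul_apply] using ENNReal.lintegral_mul_le_Lp_mul_Lq ν
          Real.HolderConjugate.two_two (hf_right p.1).aemeasurable (hf_right p.2).aemeasurable
    _ = (∫⁻ y, N y ∂μ) ^ 2 := by
        rw [lintegral_prod_mul hN.aemeasurable hN.aemeasurable, sq]

theorem eLpNorm_two_integral_le {E : Type*} [NormedAddCommGroup E] [NormedSpace ℝ E]
    (k : α → β → E) (hk : StronglyMeasurable (Function.uncurry k)) :
    eLpNorm (fun x => ∫ y, k x y ∂μ) 2 ν ≤ ∫⁻ y, eLpNorm (k · y) 2 ν ∂μ := by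
  simp only [eLpNorm_eq_lintegral_rpow_enorm_toReal two_ne_zero ENNReal.ofNat_ne_top,
    ENNReal.toReal_ofNat, ENNReal.rpow_two]
  calc (∫⁻ x, ‖∫ y, k x y ∂μ‖ₑ ^ 2 ∂ν) ^ (1 / 2 : ℝ)
      ≤ (∫⁻ x, (∫⁻ y, ‖k x y‖ₑ ∂μ) ^ 2 ∂ν) ^ (1 / 2 : ℝ) := by
        gcongr
        exact enorm_integral_le_lintegral_enorm _
    _ ≤ ((∫⁻ y, (∫⁻ x, ‖k x y‖ₑ ^ 2 ∂ν) ^ (1 / 2 : ℝ) ∂μ) ^ 2) ^ (1 / 2 : ℝ) := by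
        gcongr
        exact lintegral_sq_lintegral_le _ hk.enorm
    _ = ∫⁻ y, (∫⁻ x, ‖k x y‖ₑ ^ 2 ∂ν) ^ (1 / 2 : ℝ) ∂μ := by
        rw [← ENNReal.rpow_two, ← ENNReal.rpow_mul]
        norm_num

end Minkowski

theorem eLpNorm_two_integral_sub_le {G E : Type*} [MeasurableSpace G] [AddGroup G]
    [MeasurableSub₂ G] [MeasurableAdd G] [NormedAddCommGroup E] [NormedSpace ℝ E]
    (ν : Measure G) [SFinite ν] [ν.IsAddRightInvariant] (μ : Measure G) [SFinite μ]
    {g : G → E} (hg : StronglyMeasurable g) :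
    eLpNorm (fun x => ∫ y, g (x - y) ∂μ) 2 ν ≤ eLpNorm g 2 ν * μ Set.univ := by
  calc eLpNorm (fun x => ∫ y, g (x - y) ∂μ) 2 ν
      ≤ ∫⁻ y, eLpNorm (fun x => g (x - y)) 2 ν ∂μ :=
        eLpNorm_two_integral_le (fun x y => g (x - y)) (hg.comp_measurable measurable_sub)
    _ = ∫⁻ _, eLpNorm g 2 ν ∂μ := lintegral_congr fun y =>
        eLpNorm_comp_measurePreserving hg.aestronglyMeasurable (measurePreserving_sub_right ν y)
    _ = eLpNorm g 2 ν * μ Set.univ := lintegral_const _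

theorem MeasureTheory.MemLp.eLpNorm_two_eq_ofReal_integral_sq {α : Type*} [MeasurableSpace α]
    {ν : Measure α} {F : α → ℝ} (hF : MemLp F 2 ν) :
    eLpNorm F 2 ν = ENNReal.ofReal ((∫ x, F x ^ 2 ∂ν) ^ (1 / 2 : ℝ)) := by
  rw [hF.eLpNorm_eq_integral_rpow_norm two_ne_zero ENNReal.ofNat_ne_top]
  simp

theorem integral_sq_mul_exp_neg_mul_sq {b : ℝ} (hb : 0 < b) :
    ∫ x : ℝ, x ^ 2 * exp (-b * x ^ 2) = √π / 2 * b ^ (-(3 : ℝ) / 2) := by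
  have h_even : ∫ x : ℝ, x ^ 2 * exp (-b * x ^ 2)
      = 2 * ∫ x in Set.Ioi (0 : ℝ), x ^ 2 * exp (-b * x ^ 2) := by
    rw [← integral_comp_abs (f := fun x => x ^ 2 * exp (-b * x ^ 2))]
    simp only [sq_abs]
  have h_gamma := integral_rpow_mul_exp_neg_mul_rpow two_pos (by norm_num : (-1 : ℝ) < 2) hb
  simp only [Real.rpow_two] at h_gamma
  have h_three_halves : Gamma ((2 + 1) / 2) = √π / 2 := by
    rw [show ((2 + 1) / 2 : ℝ) = 1 / 2 + 1 by norm_num, Gamma_add_one (by norm_num),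
      Gamma_one_half_eq]
    ring
  rw [h_even, h_gamma, h_three_halves]
  ring_nf

/-- `-∂ₓ p_u(x, y)` as a function of `z = x - y`, for the heat kernel `p_u` on `ℝ`. -/
noncomputable def heatGradKernel (u z : ℝ) : ℝ :=
  (z / u) * ((√(2 * π * u))⁻¹ * exp (-(z ^ 2 / (2 * u))))

theorem continuous_heatGradKernel (u : ℝ) : Continuous (heatGradKernel u) := by
  unfold heatGradKernel
  fun_prop

theorem heatGradKernel_sq {u : ℝ} (hu : 0 < u) (z : ℝ) :
    heatGradKernel u z ^ 2 = (2 * π * u ^ 3)⁻¹ * (z ^ 2 * exp (-u⁻¹ * z ^ 2)) := by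
  have h_exp : exp (-(z ^ 2 / (2 * u))) ^ 2 = exp (-u⁻¹ * z ^ 2) := by
    rw [← exp_nat_mul]
    congr 1
    push_cast
    field_simp
  rw [heatGradKernel, mul_pow, mul_pow, h_exp, inv_pow, sq_sqrt (by positivity), div_pow]
  field_simp

theorem integrable_heatGradKernel_sq {u : ℝ} (hu : 0 < u) :
    Integrable (fun z => heatGradKernel u z ^ 2) := by
  simp only [heatGradKernel_sq hu]
  refine Integrable.const_mul ?_ _
  simpa [Real.rpow_two] using integrable_rpow_mul_exp_neg_mul_sq (inv_pos.2 hu)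
    (by norm_num : (-1 : ℝ) < 2)

theorem integral_heatGradKernel_sq {u : ℝ} (hu : 0 < u) :
    ∫ z, heatGradKernel u z ^ 2 = (u ^ (-(3 : ℝ) / 4) / (2 * π ^ ((1 : ℝ) / 4))) ^ 2 := by
  simp only [heatGradKernel_sq hu]
  rw [integral_const_mul, integral_sq_mul_exp_neg_mul_sq (inv_pos.2 hu)]
  set s := u ^ ((3 : ℝ) / 2)
  have hs : 0 < s := by positivity
  have h_inv : u⁻¹ ^ (-(3 : ℝ) / 2) = s := by
    rw [inv_rpow hu.le, ← rpow_neg hu.le, neg_div, neg_neg]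
  have h_cube : u ^ 3 = s ^ 2 := by
    rw [← rpow_natCast, ← rpow_natCast, ← rpow_mul hu.le]
    norm_num
  have h_num : (u ^ (-(3 : ℝ) / 4)) ^ 2 = s⁻¹ := by
    rw [← rpow_natCast, ← rpow_mul hu.le, ← rpow_neg hu.le]
    norm_num
  have h_den : (π ^ ((1 : ℝ) / 4)) ^ 2 = √π := by
    rw [← rpow_natCast, ← rpow_mul pi_pos.le, sqrt_eq_rpow]
    norm_num
  rw [h_inv, h_cube, div_pow, mul_pow, h_num, h_den]
  field_simp
  exact sq_sqrt pi_pos.le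

theorem eLpNorm_heatGradKernel {u : ℝ} (hu : 0 < u) :
    eLpNorm (heatGradKernel u) 2 volume
      = ENNReal.ofReal (u ^ (-(3 : ℝ) / 4) / (2 * π ^ ((1 : ℝ) / 4))) := by
  have h_memLp : MemLp (heatGradKernel u) 2 volume :=
    (memLp_two_iff_integrable_sq (continuous_heatGradKernel u).aestronglyMeasurable).2
      (integrable_heatGradKernel_sq hu)
  rw [h_memLp.eLpNorm_two_eq_ofReal_integral_sq, integral_heatGradKernel_sq hu,
    ← rpow_natCast, ← rpow_mul (by positivity)]
  norm_num

/-- Gradient-smoothing estimate for the heat semigroup acting on a finite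
measure `λ`: `‖D P_u λ‖_{L²(ℝ)} ≤ (u^{-3/4} / (2π^{1/4})) λ(ℝ)`, where
`D P_u λ (x) = ∫ ((x-y)/u) (2πu)^{-1/2} exp(-(x-y)²/(2u)) dλ(y)` up to sign. -/
theorem heat_semigroup_gradient_L2_smoothing (μ : MeasureTheory.Measure ℝ)
    [MeasureTheory.IsFiniteMeasure μ] (u : ℝ) (hu : 0 < u) :
    (∫ x : ℝ, (∫ y : ℝ, ((x - y) / u) *
        ((Real.sqrt (2 * Real.pi * u))⁻¹ * Real.exp (-((x - y) ^ 2 / (2 * u)))) ∂μ) ^ 2)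
        ^ ((1 : ℝ) / 2)
      ≤ (u ^ (-(3 : ℝ) / 4) / (2 * Real.pi ^ ((1 : ℝ) / 4))) * (μ Set.univ).toReal := by
  have hg := (continuous_heatGradKernel u).stronglyMeasurable
  have h_bound := eLpNorm_two_integral_sub_le volume μ hg
  rw [eLpNorm_heatGradKernel hu, ← ENNReal.ofReal_toReal (measure_ne_top μ Set.univ),
    ← ENNReal.ofReal_mul (by positivity)] at h_bound
  have h_memLp : MemLp (fun x => ∫ y, heatGradKernel u (x - y) ∂μ) 2 volume :=
    ⟨(hg.comp_measurable measurable_sub).integral_prod_right'.aestronglyMeasurable,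
      h_bound.trans_lt ENNReal.ofReal_lt_top⟩
  rw [h_memLp.eLpNorm_two_eq_ofReal_integral_sq] at h_bound
  exact (ENNReal.ofReal_le_ofReal_iff (by positivity)).1 h_bound
end
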